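/- arXiv:math/0411650 — 2 statements merged into one kernel-verified Lean document; each statement's English description precedes it below -/
import Mathlib

section
/- For every integer κ ≥ 1, the prolongation coefficient 𝐘_κ is given by the closed formula: 𝐘_κ = 𝒴_{x^κ} + Σ_{d=1}^{κ+1} Σ_{1≤λ_1<⋯<λ_d≤κ} Σ_{μ_1≥1,…,μ_d≥1 with μ_1λ_1+⋯+μ_dλ_d ≤ κ+1} [ (κ(κ−1)⋯(κ−μ_1λ_1−⋯−μ_dλ_d+1) / ((λ_1!)^{μ_1} μ_1! ⋯ (λ_d!)^{μ_d} μ_d!)) · 𝒴_{x^{κ−μ_1λ_1−⋯−μ_dλ_d} y^{μ_1+⋯+μ_d}} − (κ(κ−1)⋯(κ−μ_1λ_1−⋯−μ_dλ_d+2) · (μ_1λ_1+⋯+μ_dλ_d) / ((λ_1!)^{μ_1} μ_1! ⋯ (λ_d!)^{μ_d} μ_d!)) · 𝒳_{x^{κ−μ_1λ_1−⋯−μ_dλ_d+1} y^{μ_1+⋯+μ_d−1}} ] · (y_{λ_1})^{μ_1} ⋯ (y_{λ_d})^{μ_d}, where κ(κ−1)⋯(κ−s+1) denotes the falling factorial κ!/(κ−s)!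 (equal to 0 when s = κ+1, so the 𝒴 term vanishes in that boundary case). -/
/-- Partial derivative in the first variable of a function of (x,y). -/
noncomputable def pdx (F : ℝ → ℝ → ℝ) : ℝ → ℝ → ℝ := fun x y => deriv (fun t => F t y) x

/-- Partial derivative in the second variable of a function of (x,y). -/
noncomputable def pdy (F : ℝ → ℝ → ℝ) : ℝ → ℝ → ℝ := fun x y => deriv (fun t => F x t) y

/-- Mixed partial derivative `∂^{a+b} F / ∂x^a ∂y^b`. -/
noncomputable def pd (a b : ℕ) (F : ℝ → ℝ → ℝ) : ℝ → ℝ → ℝ := pdx^[a] (pdy^[b] F)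

/-- The total differentiation operator `D^λ`.  The state is `(x, j)` where `j 0` plays
the role of the dependent variable `y` and `j c` (`c ≥ 1`) is the jet variable `y_c`.
`D^λ F = ∂F/∂x + y_1 ∂F/∂y + y_2 ∂F/∂y_1 + ⋯ + y_λ ∂F/∂y_{λ-1}`. -/
noncomputable def totalD (lam : ℕ) (F : ℝ → (ℕ → ℝ) → ℝ) : ℝ → (ℕ → ℝ) → ℝ :=
  fun x j => deriv (fun t => F t j) x
    + ∑ c ∈ Finset.range lam, j (c + 1) * deriv (fun t => F x (Function.update j c t)) (j c)

/-- The prolongation coefficients `𝐘_λ`:  `prolong X Y 0 = 𝒴`,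
`𝐘_{λ+1} = D^{λ+1}(𝐘_λ) − D¹(𝒳)·y_{λ+1}` (so `prolong X Y 1 = D¹(𝒴) − D¹(𝒳)·y_1`). -/
noncomputable def prolong (X Y : ℝ → ℝ → ℝ) : ℕ → ℝ → (ℕ → ℝ) → ℝ
  | 0 => fun x j => Y x (j 0)
  | l + 1 => fun x j =>
      totalD (l + 1) (prolong X Y l) x j
        - totalD 1 (fun x' j' => X x' (j' 0)) x j * j (l + 1)

namespace PCF


def unc (F : ℝ → ℝ → ℝ) : ℝ × ℝ → ℝ := fun p => F p.1 p.2

lemma hasDerivAt_sliceX {F : ℝ → ℝ → ℝ} (h : ContDiff ℝ (⊤ : ℕ∞) (unc F)) (x y : ℝ) :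
    HasDerivAt (fun t => F t y) (fderiv ℝ (unc F) (x, y) (1, 0)) x := by
  have hF : HasFDerivAt (unc F) (fderiv ℝ (unc F) (x, y)) (x, y) :=
    (h.differentiable (by simp)).differentiableAt.hasFDerivAt
  have hline : HasDerivAt (fun t : ℝ => (t, y)) ((1 : ℝ), (0 : ℝ)) x :=
    (hasDerivAt_id x).prodMk (hasDerivAt_const x y)
  exact hF.comp_hasDerivAt x hline

lemma hasDerivAt_sliceY {F : ℝ → ℝ → ℝ} (h : ContDiff ℝ (⊤ : ℕ∞) (unc F)) (x y : ℝ) :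
    HasDerivAt (fun t => F x t) (fderiv ℝ (unc F) (x, y) (0, 1)) y := by
  have hF : HasFDerivAt (unc F) (fderiv ℝ (unc F) (x, y)) (x, y) :=
    (h.differentiable (by simp)).differentiableAt.hasFDerivAt
  have hline : HasDerivAt (fun t : ℝ => (x, t)) ((0 : ℝ), (1 : ℝ)) y :=
    (hasDerivAt_const y x).prodMk (hasDerivAt_id y)
  exact hF.comp_hasDerivAt y hline

lemma pdx_eq {F : ℝ → ℝ → ℝ} (h : ContDiff ℝ (⊤ : ℕ∞) (unc F)) (x y : ℝ) :
    pdx F x y = fderiv ℝ (unc F) (x, y) (1, 0) := (hasDerivAt_sliceX h x y).deriv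

lemma pdy_eq {F : ℝ → ℝ → ℝ} (h : ContDiff ℝ (⊤ : ℕ∞) (unc F)) (x y : ℝ) :
    pdy F x y = fderiv ℝ (unc F) (x, y) (0, 1) := (hasDerivAt_sliceY h x y).deriv

lemma diffX {F : ℝ → ℝ → ℝ} (h : ContDiff ℝ (⊤ : ℕ∞) (unc F)) (x y : ℝ) :
    DifferentiableAt ℝ (fun t => F t y) x := (hasDerivAt_sliceX h x y).differentiableAt

lemma diffY {F : ℝ → ℝ → ℝ} (h : ContDiff ℝ (⊤ : ℕ∞) (unc F)) (x y : ℝ) :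
    DifferentiableAt ℝ (fun t => F x t) y := (hasDerivAt_sliceY h x y).differentiableAt

lemma smooth_fderiv {F : ℝ → ℝ → ℝ} (h : ContDiff ℝ (⊤ : ℕ∞) (unc F)) :
    ContDiff ℝ (⊤ : ℕ∞) (fderiv ℝ (unc F)) := h.fderiv_right (by simp)

lemma smooth_pdx {F : ℝ → ℝ → ℝ} (h : ContDiff ℝ (⊤ : ℕ∞) (unc F)) : ContDiff ℝ (⊤ : ℕ∞) (unc (pdx F)) := by
  have : unc (pdx F) = fun p : ℝ × ℝ => fderiv ℝ (unc F) p (1, 0) := by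
    funext p; exact pdx_eq h p.1 p.2
  rw [this]
  exact (smooth_fderiv h).clm_apply contDiff_const

lemma smooth_pdy {F : ℝ → ℝ → ℝ} (h : ContDiff ℝ (⊤ : ℕ∞) (unc F)) : ContDiff ℝ (⊤ : ℕ∞) (unc (pdy F)) := by
  have : unc (pdy F) = fun p : ℝ × ℝ => fderiv ℝ (unc F) p (0, 1) := by
    funext p; exact pdy_eq h p.1 p.2
  rw [this]
  exact (smooth_fderiv h).clm_apply contDiff_const

/-- derivative in direction `v` of `p ↦ (fderiv unc F) p w`, along a line. -/
lemma hasDerivAt_fderiv_apply {F : ℝ → ℝ → ℝ} (h : ContDiff ℝ (⊤ : ℕ∞) (unc F))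
    (g : ℝ → ℝ × ℝ) (g' : ℝ × ℝ) (t₀ : ℝ) (hg : HasDerivAt g g' t₀) (w : ℝ × ℝ) :
    HasDerivAt (fun t => fderiv ℝ (unc F) (g t) w)
      (fderiv ℝ (fderiv ℝ (unc F)) (g t₀) g' w) t₀ := by
  have hG : HasFDerivAt (fderiv ℝ (unc F)) (fderiv ℝ (fderiv ℝ (unc F)) (g t₀)) (g t₀) :=
    ((smooth_fderiv h).differentiable (by simp)).differentiableAt.hasFDerivAt
  have h1 : HasFDerivAt (fun p => fderiv ℝ (unc F) p w)
      (((fderiv ℝ (unc F) (g t₀)).comp (0 : ℝ × ℝ →L[ℝ] ℝ × ℝ))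
        + (fderiv ℝ (fderiv ℝ (unc F)) (g t₀)).flip w) (g t₀) :=
    hG.clm_apply (hasFDerivAt_const w (g t₀))
  have h2 := h1.comp_hasDerivAt t₀ hg
  simpa [Function.comp_def] using h2

lemma clairaut {F : ℝ → ℝ → ℝ} (h : ContDiff ℝ (⊤ : ℕ∞) (unc F)) :
    pdx (pdy F) = pdy (pdx F) := by
  funext x y
  have hsym : ∀ v w : ℝ × ℝ,
      fderiv ℝ (fderiv ℝ (unc F)) (x, y) v w = fderiv ℝ (fderiv ℝ (unc F)) (x, y) w v := by
    intro v w
    refine second_derivative_symmetric (f := unc F) (f' := fderiv ℝ (unc F)) (x := (x,y)) ?_ ?_ v w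
    · intro p; exact (h.differentiable (by simp)).differentiableAt.hasFDerivAt
    · exact ((smooth_fderiv h).differentiable (by simp)).differentiableAt.hasFDerivAt
  have e1 : pdx (pdy F) x y = fderiv ℝ (fderiv ℝ (unc F)) (x, y) (1, 0) (0, 1) := by
    have hfun : (fun t => pdy F t y) = fun t => fderiv ℝ (unc F) (t, y) (0, 1) := by
      funext t; exact pdy_eq h t y
    have hline : HasDerivAt (fun t : ℝ => (t, y)) ((1 : ℝ), (0 : ℝ)) x :=
      (hasDerivAt_id x).prodMk (hasDerivAt_const x y)
    have := (hasDerivAt_fderiv_apply h _ _ x hline (0, 1)).deriv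
    simpa [pdx, hfun] using this
  have e2 : pdy (pdx F) x y = fderiv ℝ (fderiv ℝ (unc F)) (x, y) (0, 1) (1, 0) := by
    have hfun : (fun t => pdx F x t) = fun t => fderiv ℝ (unc F) (x, t) (1, 0) := by
      funext t; exact pdx_eq h x t
    have hline : HasDerivAt (fun t : ℝ => (x, t)) ((0 : ℝ), (1 : ℝ)) y :=
      (hasDerivAt_const y x).prodMk (hasDerivAt_id y)
    have := (hasDerivAt_fderiv_apply h _ _ y hline (1, 0)).deriv
    simpa [pdy, hfun] using this
  rw [e1, e2, hsym]

lemma smooth_pd {F : ℝ → ℝ → ℝ} (h : ContDiff ℝ (⊤ : ℕ∞) (unc F)) (a b : ℕ) :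
    ContDiff ℝ (⊤ : ℕ∞) (unc (pd a b F)) := by
  have hb : ∀ b, ContDiff ℝ (⊤ : ℕ∞) (unc (pdy^[b] F)) := by
    intro b
    induction b with
    | zero => exact h
    | succ b ih => rw [Function.iterate_succ_apply']; exact smooth_pdy ih
  induction a with
  | zero => exact hb b
  | succ a ih =>
      unfold pd at *
      rw [Function.iterate_succ_apply']
      exact smooth_pdx ih

lemma pd_succ_x (a b : ℕ) (F : ℝ → ℝ → ℝ) : pd (a + 1) b F = pdx (pd a b F) := by
  unfold pd; rw [Function.iterate_succ_apply']

lemma pd_succ_y {F : ℝ → ℝ → ℝ} (h : ContDiff ℝ (⊤ : ℕ∞) (unc F)) (a b : ℕ) :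
    pd a (b + 1) F = pdy (pd a b F) := by
  induction a with
  | zero => unfold pd; simp [Function.iterate_succ_apply']
  | succ a ih =>
      rw [pd_succ_x, pd_succ_x, ih, clairaut (smooth_pd h a b)]



noncomputable section
open Finsupp

def wgt (m : ℕ →₀ ℕ) : ℕ := m.sum fun i k => i * k
def deg (m : ℕ →₀ ℕ) : ℕ := m.sum fun _ k => k
def zf (m : ℕ →₀ ℕ) : ℕ := m.prod fun i k => i.factorial ^ k * k.factorial
def Jmono (m : ℕ →₀ ℕ) (j : ℕ → ℝ) : ℝ := m.prod fun i k => (j i) ^ k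

def MM (κ : ℕ) : Finset (ℕ →₀ ℕ) :=
  (Finset.Iic (Finsupp.indicator (Finset.Icc 1 κ) fun _ _ => κ + 1)).filter
    fun m => wgt m ≤ κ + 1

lemma wgt_zero : wgt 0 = 0 := by simp [wgt]
lemma deg_zero : deg 0 = 0 := by simp [deg]
lemma zf_zero : zf 0 = 1 := by simp [zf]
lemma Jmono_zero (j : ℕ → ℝ) : Jmono 0 j = 1 := by simp [Jmono]

lemma wgt_add (a b : ℕ →₀ ℕ) : wgt (a + b) = wgt a + wgt b :=
  Finsupp.sum_add_index' (by simp) (by intro i b1 b2; ring)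

lemma deg_add (a b : ℕ →₀ ℕ) : deg (a + b) = deg a + deg b :=
  Finsupp.sum_add_index' (by simp) (by intro i b1 b2; ring)

lemma wgt_single (i k : ℕ) : wgt (Finsupp.single i k) = i * k := by
  simp [wgt, Finsupp.sum_single_index]

lemma deg_single (i k : ℕ) : deg (Finsupp.single i k) = k := by
  simp [deg, Finsupp.sum_single_index]

lemma term_le_wgt (m : ℕ →₀ ℕ) (i : ℕ) : i * m i ≤ wgt m := by
  by_cases h : m i = 0
  · simp [h]
  · exact Finset.single_le_sum (f := fun i => i * m i) (by intro i _; positivity)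
      (Finsupp.mem_support_iff.mpr h)

lemma mem_MM {κ : ℕ} {m : ℕ →₀ ℕ} :
    m ∈ MM κ ↔ (∀ i, m i ≠ 0 → 1 ≤ i ∧ i ≤ κ) ∧ wgt m ≤ κ + 1 := by
  simp only [MM, Finset.mem_filter, Finset.mem_Iic]
  constructor
  · rintro ⟨hle, hw⟩
    refine ⟨fun i hi => ?_, hw⟩
    have := hle i
    rw [Finsupp.indicator_apply] at this
    by_contra hcon
    have : ¬ i ∈ Finset.Icc 1 κ := by simp only [Finset.mem_Icc]; omega
    simp [this] at *
    omega
  · rintro ⟨hsupp, hw⟩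
    refine ⟨?_, hw⟩
    intro i
    rw [Finsupp.indicator_apply]
    by_cases h : i ∈ Finset.Icc 1 κ
    · simp only [h, dif_pos]
      have h1 : 1 ≤ i := (Finset.mem_Icc.mp h).1
      have := term_le_wgt m i
      calc m i = 1 * m i := (one_mul _).symm
        _ ≤ i * m i := Nat.mul_le_mul_right _ h1
        _ ≤ wgt m := term_le_wgt m i
        _ ≤ κ + 1 := hw
    · simp only [h, dif_neg, not_false_iff]
      by_contra hcon
      have := hsupp i (by omega)
      simp [Finset.mem_Icc] at h
      omega

lemma support_add_single (m : ℕ →₀ ℕ) (c : ℕ) :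
    (m + Finsupp.single c 1).support = insert c m.support := by
  ext i
  simp only [Finsupp.mem_support_iff, Finsupp.add_apply, Finsupp.single_apply,
    Finset.mem_insert]
  by_cases h : i = c <;> simp [h] <;> omega

lemma add_single_apply (m : ℕ →₀ ℕ) (c i : ℕ) :
    ((m + Finsupp.single c 1) : ℕ →₀ ℕ) i = m i + if c = i then 1 else 0 := by
  simp [Finsupp.add_apply, Finsupp.single_apply]

lemma zf_add_single (m : ℕ →₀ ℕ) (c : ℕ) :
    zf (m + Finsupp.single c 1) = zf m * (c.factorial * (m c + 1)) := by
  classical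
  have h1 : zf (m + Finsupp.single c 1)
      = (m + Finsupp.single c 1).prod (fun i k => i.factorial ^ k)
        * (m + Finsupp.single c 1).prod (fun _ k => k.factorial) := by
    unfold zf Finsupp.prod
    rw [← Finset.prod_mul_distrib]
  have h2 : zf m = m.prod (fun i k => i.factorial ^ k) * m.prod (fun _ k => k.factorial) := by
    unfold zf Finsupp.prod
    rw [← Finset.prod_mul_distrib]
  have hfac : (m + Finsupp.single c 1).prod (fun i k => i.factorial ^ k)
      = m.prod (fun i k => i.factorial ^ k) * c.factorial := by
    rw [Finsupp.prod_add_index' (by simp) (by intro a b1 b2; rw [pow_add])]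
    simp [Finsupp.prod_single_index]
  have hcnt : (m + Finsupp.single c 1).prod (fun _ k => k.factorial)
      = m.prod (fun _ k => k.factorial) * (m c + 1) := by
    unfold Finsupp.prod
    rw [support_add_single]
    by_cases hc : c ∈ m.support
    · rw [Finset.insert_eq_self.mpr hc]
      rw [← Finset.mul_prod_erase _ _ hc, ← Finset.mul_prod_erase m.support
        (fun i => (m i).factorial) hc]
      have : ∀ i ∈ m.support.erase c, (((m + Finsupp.single c 1) : ℕ →₀ ℕ) i).factorial
          = (m i).factorial := by
        intro i hi
        have : i ≠ c := Finset.ne_of_mem_erase hi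
        rw [add_single_apply]
        simp [Ne.symm this]
      rw [Finset.prod_congr rfl this]
      rw [add_single_apply]
      simp [Nat.factorial_succ]
      ring
    · rw [Finset.prod_insert hc]
      have hmc : m c = 0 := Finsupp.notMem_support_iff.mp hc
      have : ∀ i ∈ m.support, (((m + Finsupp.single c 1) : ℕ →₀ ℕ) i).factorial = (m i).factorial := by
        intro i hi
        have : i ≠ c := by rintro rfl; exact hc hi
        rw [add_single_apply]; simp [Ne.symm this]
      rw [Finset.prod_congr rfl this, add_single_apply]
      simp [hmc]
      try ring
  rw [h1, h2, hfac, hcnt]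
  ring

lemma sub_add_single {m : ℕ →₀ ℕ} {c : ℕ} (h : 1 ≤ m c) :
    (m - Finsupp.single c 1) + Finsupp.single c 1 = m := by
  ext i
  simp only [Finsupp.add_apply, Finsupp.tsub_apply, Finsupp.single_apply]
  by_cases hic : c = i
  · subst hic; simp; omega
  · simp [hic]

lemma add_sub_single (m : ℕ →₀ ℕ) (c : ℕ) :
    (m + Finsupp.single c 1) - Finsupp.single c 1 = m := by
  ext i
  simp only [Finsupp.add_apply, Finsupp.tsub_apply, Finsupp.single_apply]
  by_cases hic : c = i <;> simp [hic]

lemma Jmono_eq_prod {m : ℕ →₀ ℕ} {s : Finset ℕ} (h : m.support ⊆ s) (j : ℕ → ℝ) :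
    Jmono m j = ∏ i ∈ s, (j i) ^ m i := by
  unfold Jmono Finsupp.prod
  exact Finset.prod_subset h (by intro i _ hi; simp [Finsupp.notMem_support_iff.mp hi])

lemma wgt_eq_sum {m : ℕ →₀ ℕ} {s : Finset ℕ} (h : m.support ⊆ s) :
    wgt m = ∑ i ∈ s, i * m i := by
  unfold wgt Finsupp.sum
  exact Finset.sum_subset h (by intro i _ hi; simp [Finsupp.notMem_support_iff.mp hi])

lemma descFactorial_rec (n s : ℕ) :
    (n + 1).descFactorial s = n.descFactorial s + s * n.descFactorial (s - 1) := by
  cases s with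
  | zero => simp
  | succ s =>
      rw [Nat.succ_descFactorial_succ, Nat.descFactorial_succ]
      simp only [Nat.add_sub_cancel]
      by_cases h : s ≤ n
      · have : n - s + (s + 1) = n + 1 := by omega
        nlinarith [Nat.descFactorial_eq_zero_iff_lt (n := n) (k := s)]
      · have h1 : n.descFactorial s = 0 := Nat.descFactorial_eq_zero_iff_lt.mpr (by omega)
        simp [h1]

end


-- ===== Part 3 : coefficient identities =====
section Coeff
open Finsupp

noncomputable def tY (κ : ℕ) (m : ℕ →₀ ℕ) : ℝ :=
  (κ.descFactorial (wgt m) : ℝ) / (zf m : ℝ)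

noncomputable def tX (κ : ℕ) (m : ℕ →₀ ℕ) : ℝ :=
  ((κ.descFactorial (wgt m - 1) * wgt m : ℕ) : ℝ) / (zf m : ℝ)

lemma zf_pos (m : ℕ →₀ ℕ) : 0 < zf m := by
  unfold zf Finsupp.prod
  apply Finset.prod_pos
  intro i _
  positivity

lemma zf_single (i k : ℕ) : zf (Finsupp.single i k) = i.factorial ^ k * k.factorial := by
  unfold zf; rw [Finsupp.prod_single_index (by simp)]

lemma single_mem_MM_succ (κ : ℕ) : Finsupp.single (κ + 1) 1 ∈ MM (κ + 1) := by
  rw [mem_MM]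
  constructor
  · intro i hi
    rw [Finsupp.single_apply] at hi
    by_cases h : κ + 1 = i
    · omega
    · simp [h] at hi
  · rw [wgt_single]; omega

lemma single_not_mem_MM (κ : ℕ) : Finsupp.single (κ + 1) 1 ∉ MM κ := by
  rw [mem_MM]
  push_neg
  intro h
  have := h (κ + 1) (by simp)
  omega

lemma two_mem_MM_succ (κ : ℕ) : Finsupp.single 1 1 + Finsupp.single (κ + 1) 1 ∈ MM (κ + 1) := by
  rw [mem_MM]
  constructor
  · intro i hi
    rw [Finsupp.add_apply, Finsupp.single_apply, Finsupp.single_apply] at hi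
    by_cases h1 : (1 : ℕ) = i
    · omega
    · by_cases h2 : κ + 1 = i
      · omega
      · simp [h1, h2] at hi
  · rw [wgt_add, wgt_single, wgt_single]; omega

lemma two_ne_single (κ : ℕ) :
    Finsupp.single 1 1 + Finsupp.single (κ + 1) 1 ≠ Finsupp.single (κ + 1) 1 := by
  intro h
  have := congrArg wgt h
  rw [wgt_add, wgt_single, wgt_single] at this
  omega

/-- concentration: an element of `MM (κ+1)` with a part `κ+1` and weight `≤ κ+1`
is exactly `single (κ+1) 1`. -/
lemma conc {κ : ℕ} {r : ℕ →₀ ℕ} (hr : r ∈ MM (κ + 1)) (h1 : 1 ≤ r (κ + 1))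
    (h2 : wgt r ≤ κ + 1) : r = Finsupp.single (κ + 1) 1 := by
  rw [mem_MM] at hr
  obtain ⟨hsupp, _⟩ := hr
  have hw : wgt r = ∑ i ∈ Finset.Icc 1 (κ + 1), i * r i := by
    apply wgt_eq_sum
    intro i hi
    rw [Finsupp.mem_support_iff] at hi
    have := hsupp i hi
    rw [Finset.mem_Icc]; omega
  have hsplit : ∑ i ∈ Finset.Icc 1 (κ + 1), i * r i
      = (κ + 1) * r (κ + 1) + ∑ i ∈ Finset.Icc 1 κ, i * r i := by
    rw [Finset.sum_Icc_succ_top (by omega : 1 ≤ κ + 1)]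
    ring
  have hwr : (κ + 1) * r (κ + 1) + ∑ i ∈ Finset.Icc 1 κ, i * r i ≤ κ + 1 := by omega
  have ha1 : r (κ + 1) = 1 := by
    have h2' : r (κ + 1) ≤ 1 := by
      by_contra hcon
      push_neg at hcon
      have : (κ + 1) * 2 ≤ (κ + 1) * r (κ + 1) := Nat.mul_le_mul_left _ (by omega)
      omega
    omega
  have hd0 : ∑ i ∈ Finset.Icc 1 κ, i * r i = 0 := by
    rw [ha1] at hwr; omega
  have hz : ∑ i ∈ Finset.Icc 1 κ, i * r i = 0 ∧ r (κ + 1) = 1 := ⟨hd0, ha1⟩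
  have hzero : ∀ i ∈ Finset.Icc 1 κ, i * r i = 0 := by
    intro i hi
    have := Finset.sum_eq_zero_iff.mp hz.1 i hi
    omega
  ext i
  rw [Finsupp.single_apply]
  by_cases h : κ + 1 = i
  · rw [← h]; simp [hz.2]
  · simp only [h, if_false]
    by_cases hi : r i = 0
    · exact hi
    · have hs := hsupp i hi
      have h0 := hzero i (Finset.mem_Icc.mpr (by omega))
      rcases Nat.mul_eq_zero.mp h0 with h | h <;> omega

lemma sub1_mem {κ : ℕ} {q : ℕ →₀ ℕ} (hq : q ∈ MM (κ + 1)) :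
    q - Finsupp.single 1 1 ∈ MM (κ + 1) := by
  rw [mem_MM] at hq ⊢
  obtain ⟨hs, hw⟩ := hq
  constructor
  · intro i hi
    rw [Finsupp.tsub_apply] at hi
    exact hs i (by omega)
  · have h1 : wgt (q - Finsupp.single 1 1) = ∑ i ∈ Finset.Icc 1 (κ + 1), i * ((q - Finsupp.single 1 1 : ℕ →₀ ℕ)) i := by
      apply wgt_eq_sum
      intro i hi
      rw [Finsupp.mem_support_iff, Finsupp.tsub_apply] at hi
      have := hs i (by omega)
      rw [Finset.mem_Icc]; omega
    have h2 : wgt q = ∑ i ∈ Finset.Icc 1 (κ + 1), i * q i := by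
      apply wgt_eq_sum
      intro i hi
      rw [Finsupp.mem_support_iff] at hi
      have := hs i hi
      rw [Finset.mem_Icc]; omega
    have h3 : wgt (q - Finsupp.single 1 1) ≤ wgt q := by
      rw [h1, h2]
      apply Finset.sum_le_sum
      intro i _
      rw [Finsupp.tsub_apply]
      exact Nat.mul_le_mul_left _ (Nat.sub_le _ _)
    omega



lemma not_mem_MM_char {κ : ℕ} {q : ℕ →₀ ℕ} (hq : q ∈ MM (κ + 1)) (h : q ∉ MM κ)
    (hw : wgt q ≤ κ + 1) : q = Finsupp.single (κ + 1) 1 := by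
  rw [mem_MM] at h
  rcases not_and_or.mp h with hA | hB
  · push_neg at hA
    obtain ⟨i, hi0, hi⟩ := hA
    have hmem := (mem_MM.mp hq).1 i hi0
    have hik : i = κ + 1 := by omega
    exact conc hq (by rw [← hik]; omega) hw
  · exact absurd hw hB

lemma wgt_le_of_mem {κ : ℕ} {q : ℕ →₀ ℕ} (hq : q ∈ MM κ) : wgt q ≤ κ + 1 :=
  (mem_MM.mp hq).2

lemma MM_mono (κ : ℕ) : MM κ ⊆ MM (κ + 1) := by
  intro m hm
  rw [mem_MM] at hm ⊢
  exact ⟨fun i hi => by have := hm.1 i hi; omega, by omega⟩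

lemma AY_eval {κ : ℕ} {q : ℕ →₀ ℕ} (hq : q ∈ MM (κ + 1)) :
    (if q ∈ MM κ then tY κ q else 0)
      = (κ.descFactorial (wgt q) : ℝ) / (zf q : ℝ) := by
  by_cases h : q ∈ MM κ
  · simp [h, tY]
  · simp only [h, if_false]
    have hgt : κ < wgt q := by
      by_contra hcon
      push_neg at hcon
      apply h
      rw [mem_MM]
      refine ⟨fun i hi => ?_, by omega⟩
      have h1 := (mem_MM.mp hq).1 i hi
      have h2 := term_le_wgt q i
      have h3 : i ≤ i * q i := Nat.le_mul_of_pos_right i (by omega)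
      omega
    rw [Nat.descFactorial_eq_zero_iff_lt.mpr hgt]
    simp

lemma AX_eval {κ : ℕ} {q : ℕ →₀ ℕ} (hq : q ∈ MM (κ + 1)) :
    (if q ∈ MM κ then tX κ q else 0)
      = ((κ.descFactorial (wgt q - 1) * wgt q : ℕ) : ℝ) / (zf q : ℝ)
        - (if q = Finsupp.single (κ + 1) 1 then 1 else 0) := by
  by_cases h : q ∈ MM κ
  · have hne : q ≠ Finsupp.single (κ + 1) 1 := by
      rintro rfl; exact single_not_mem_MM κ h
    simp [h, hne, tX]
  · simp only [h, if_false]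
    by_cases he : q = Finsupp.single (κ + 1) 1
    · subst he
      have hw : wgt (Finsupp.single (κ + 1) 1) = κ + 1 := by rw [wgt_single]; ring
      have hzf : zf (Finsupp.single (κ + 1) 1) = (κ + 1).factorial := by
        rw [zf_single]; simp [Nat.factorial]
      rw [hw, hzf]
      have h1 : κ + 1 - 1 = κ := by omega
      rw [h1, Nat.descFactorial_self]
      have h2 : (κ.factorial * (κ + 1) : ℕ) = (κ + 1).factorial := by
        rw [Nat.factorial_succ]; ring
      rw [h2]
      have : ((κ + 1).factorial : ℝ) ≠ 0 := Nat.cast_ne_zero.mpr (κ + 1).factorial_ne_zero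
      field_simp
      simp
    · simp only [he, if_false]
      by_cases hs0 : wgt q = 0
      · simp [hs0]
      · have hge : κ + 2 ≤ wgt q := by
          by_contra hcon
          push_neg at hcon
          exact he (not_mem_MM_char hq h (by omega))
        have : κ.descFactorial (wgt q - 1) = 0 :=
          Nat.descFactorial_eq_zero_iff_lt.mpr (by omega)
        simp [this]

lemma sub1_fact {q : ℕ →₀ ℕ} (h1 : 1 ≤ q 1) :
    wgt q = wgt (q - Finsupp.single 1 1) + 1
    ∧ deg q = deg (q - Finsupp.single 1 1) + 1
    ∧ zf q = zf (q - Finsupp.single 1 1) * q 1 := by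
  have hq1 : (q - Finsupp.single 1 1) + Finsupp.single 1 1 = q := sub_add_single h1
  have hv : ((q - Finsupp.single 1 1 : ℕ →₀ ℕ)) 1 + 1 = q 1 := by
    rw [Finsupp.tsub_apply]
    simp [Finsupp.single_apply]
    omega
  refine ⟨?_, ?_, ?_⟩
  · conv_lhs => rw [← hq1]
    rw [wgt_add, wgt_single]
  · conv_lhs => rw [← hq1]
    rw [deg_add, deg_single]
  · conv_lhs => rw [← hq1]
    rw [zf_add_single, hv]
    simp [Nat.factorial_one]

lemma BY_eval {κ : ℕ} {q : ℕ →₀ ℕ} (hq : q ∈ MM (κ + 1)) :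
    (if 1 ≤ q 1 ∧ q - Finsupp.single 1 1 ∈ MM κ then tY κ (q - Finsupp.single 1 1) else 0)
      = (q 1 : ℝ) * ((κ.descFactorial (wgt q - 1) : ℝ) / (zf q : ℝ)) := by
  by_cases hc : 1 ≤ q 1 ∧ q - Finsupp.single 1 1 ∈ MM κ
  · obtain ⟨h1, h2⟩ := hc
    obtain ⟨hw, hd, hz⟩ := sub1_fact h1
    rw [if_pos (⟨h1, h2⟩ : 1 ≤ q 1 ∧ q - Finsupp.single 1 1 ∈ MM κ)]
    unfold tY
    have hw' : wgt (q - Finsupp.single 1 1) = wgt q - 1 := by omega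
    rw [hw', hz]
    have hzr : ((zf (q - Finsupp.single 1 1) : ℝ)) ≠ 0 :=
      Nat.cast_ne_zero.mpr (zf_pos _).ne'
    have hq1 : (q 1 : ℝ) ≠ 0 := Nat.cast_ne_zero.mpr (by omega)
    push_cast
    field_simp
  · simp only [hc, if_false]
    by_cases h1 : 1 ≤ q 1
    · have h2 : q - Finsupp.single 1 1 ∉ MM κ := fun hmm => hc ⟨h1, hmm⟩
      obtain ⟨hw, hd, hz⟩ := sub1_fact h1
      have hsub : q - Finsupp.single 1 1 ∈ MM (κ + 1) := sub1_mem hq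
      have hwle : wgt (q - Finsupp.single 1 1) ≤ κ + 1 := by
        have := wgt_le_of_mem hq; omega
      have heq := not_mem_MM_char hsub h2 hwle
      have hwq : wgt (q - Finsupp.single 1 1) = κ + 1 := by
        rw [heq, wgt_single]; ring
      have : κ.descFactorial (wgt q - 1) = 0 :=
        Nat.descFactorial_eq_zero_iff_lt.mpr (by omega)
      simp [this]
    · have h0 : q 1 = 0 := by omega
      simp [h0]

lemma BX_eval {κ : ℕ} {q : ℕ →₀ ℕ} (hq : q ∈ MM (κ + 1)) :
    (if 1 ≤ q 1 ∧ q - Finsupp.single 1 1 ∈ MM κ then tX κ (q - Finsupp.single 1 1) else 0)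
      = (q 1 : ℝ) * (((κ.descFactorial (wgt q - 1 - 1) * (wgt q - 1) : ℕ) : ℝ) / (zf q : ℝ))
        - (if q = Finsupp.single 1 1 + Finsupp.single (κ + 1) 1 then 1 else 0) := by
  by_cases hc : 1 ≤ q 1 ∧ q - Finsupp.single 1 1 ∈ MM κ
  · obtain ⟨h1, h2⟩ := hc
    obtain ⟨hw, hd, hz⟩ := sub1_fact h1
    have hne : q ≠ Finsupp.single 1 1 + Finsupp.single (κ + 1) 1 := by
      rintro rfl
      apply single_not_mem_MM κ
      have : (Finsupp.single 1 1 + Finsupp.single (κ + 1) 1) - Finsupp.single 1 1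
          = Finsupp.single (κ + 1) 1 := by
        rw [add_comm, add_sub_single]
      rwa [this] at h2
    rw [if_pos (⟨h1, h2⟩ : 1 ≤ q 1 ∧ q - Finsupp.single 1 1 ∈ MM κ), if_neg hne, sub_zero]
    unfold tX
    have hw' : wgt (q - Finsupp.single 1 1) = wgt q - 1 := by omega
    rw [hw', hz]
    have hzr : ((zf (q - Finsupp.single 1 1) : ℝ)) ≠ 0 :=
      Nat.cast_ne_zero.mpr (zf_pos _).ne'
    have hq1 : (q 1 : ℝ) ≠ 0 := Nat.cast_ne_zero.mpr (by omega)
    push_cast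
    field_simp
  · simp only [hc, if_false]
    by_cases h1 : 1 ≤ q 1
    · have h2 : q - Finsupp.single 1 1 ∉ MM κ := fun hmm => hc ⟨h1, hmm⟩
      obtain ⟨hw, hd, hz⟩ := sub1_fact h1
      have hsub : q - Finsupp.single 1 1 ∈ MM (κ + 1) := sub1_mem hq
      have hwle : wgt (q - Finsupp.single 1 1) ≤ κ + 1 := by
        have := wgt_le_of_mem hq; omega
      have heq := not_mem_MM_char hsub h2 hwle
      have hqe : q = Finsupp.single 1 1 + Finsupp.single (κ + 1) 1 := by
        rw [← sub_add_single h1, heq, add_comm]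
      rw [if_pos hqe]
      have hwq2 : wgt q = κ + 2 := by
        rw [hw, heq, wgt_single]; ring
      have hz2 : zf q = (κ + 1).factorial * q 1 := by
        rw [hz, heq, zf_single]
        simp [Nat.factorial_one]
      have e1 : wgt q - 1 - 1 = κ := by omega
      have e2 : wgt q - 1 = κ + 1 := by omega
      rw [e1, e2, Nat.descFactorial_self, hz2]
      have hfk : ((κ + 1).factorial : ℝ) ≠ 0 := Nat.cast_ne_zero.mpr (κ + 1).factorial_ne_zero
      have hq1 : (q 1 : ℝ) ≠ 0 := Nat.cast_ne_zero.mpr (by omega)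
      push_cast [Nat.factorial_succ]
      field_simp
      ring
    · have h0 : q 1 = 0 := by omega
      have hne : q ≠ Finsupp.single 1 1 + Finsupp.single (κ + 1) 1 := by
        rintro rfl
        rw [Finsupp.add_apply] at h0
        simp [Finsupp.single_apply] at h0
      simp [h0, hne]


/-- facts about the move `q ↦ q + δ_c - δ_{c+1}` (for `q (c+1) ≥ 1`). -/
lemma C_fact {κ c : ℕ} {q : ℕ →₀ ℕ} (hq : q ∈ MM (κ + 1)) (hc1 : 1 ≤ c) (hc2 : c ≤ κ)
    (h1 : 1 ≤ q (c + 1)) :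
    (q + Finsupp.single c 1 - Finsupp.single (c + 1) 1) ∈ MM κ
    ∧ wgt q = wgt (q + Finsupp.single c 1 - Finsupp.single (c + 1) 1) + 1
    ∧ deg (q + Finsupp.single c 1 - Finsupp.single (c + 1) 1) = deg q
    ∧ zf (q + Finsupp.single c 1 - Finsupp.single (c + 1) 1) * ((c + 1) * q (c + 1))
        = zf q * (q c + 1) := by
  set r := q - Finsupp.single (c + 1) 1 with hr
  have hrq : r + Finsupp.single (c + 1) 1 = q := sub_add_single h1
  have hp : q + Finsupp.single c 1 - Finsupp.single (c + 1) 1 = r + Finsupp.single c 1 := by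
    conv_lhs => rw [← hrq]
    rw [add_right_comm, add_sub_single]
  have hrc : r c = q c := by
    rw [hr, Finsupp.tsub_apply, Finsupp.single_apply]
    have : ¬ (c + 1 = c) := by omega
    simp [this]
  have hrc1 : r (c + 1) + 1 = q (c + 1) := by
    rw [hr, Finsupp.tsub_apply, Finsupp.single_apply]
    simp
    omega
  have hwq : wgt q = wgt r + (c + 1) := by
    conv_lhs => rw [← hrq]
    rw [wgt_add, wgt_single]
    ring
  have hwp : wgt (r + Finsupp.single c 1) = wgt r + c := by
    rw [wgt_add, wgt_single]
    ring
  have hdq : deg q = deg r + 1 := by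
    conv_lhs => rw [← hrq]
    rw [deg_add, deg_single]
  have hdp : deg (r + Finsupp.single c 1) = deg r + 1 := by
    rw [deg_add, deg_single]
  have hzq : zf q = zf r * ((c + 1).factorial * q (c + 1)) := by
    conv_lhs => rw [← hrq]
    rw [zf_add_single, hrc1]
  have hzp : zf (r + Finsupp.single c 1) = zf r * (c.factorial * (q c + 1)) := by
    rw [zf_add_single, hrc]
  have hqw := wgt_le_of_mem hq
  refine ⟨?_, ?_, ?_, ?_⟩
  · rw [hp, mem_MM]
    constructor
    · intro i hi
      rw [add_single_apply] at hi
      by_cases hic : c = i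
      · omega
      · simp only [hic, if_false, add_zero] at hi
        have hri : r i ≤ q i := by
          rw [hr, Finsupp.tsub_apply]; omega
        have hmem := (mem_MM.mp hq).1 i (by omega)
        refine ⟨hmem.1, ?_⟩
        by_contra hik
        have hik' : i = κ + 1 := by omega
        have ht := term_le_wgt r i
        rw [hik'] at ht hi
        have : κ + 1 ≤ (κ + 1) * r (κ + 1) := Nat.le_mul_of_pos_right _ (by omega)
        omega
    · omega
  · rw [hp]; omega
  · rw [hp, hdp, hdq]
  · rw [hp, hzp, hzq, Nat.factorial_succ]
    ring

lemma CY_eval {κ : ℕ} {q : ℕ →₀ ℕ} (hq : q ∈ MM (κ + 1)) {c : ℕ}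
    (hc : c ∈ Finset.Icc 1 κ) :
    (if 1 ≤ q (c + 1) ∧ q + Finsupp.single c 1 - Finsupp.single (c + 1) 1 ∈ MM κ
        then ((q c + 1 : ℕ) : ℝ) * tY κ (q + Finsupp.single c 1 - Finsupp.single (c + 1) 1)
        else 0)
      = (((c + 1) * q (c + 1) : ℕ) : ℝ)
          * ((κ.descFactorial (wgt q - 1) : ℝ) / (zf q : ℝ)) := by
  rw [Finset.mem_Icc] at hc
  by_cases h1 : 1 ≤ q (c + 1)
  · obtain ⟨hmem, hw, hd, hz⟩ := C_fact hq hc.1 hc.2 h1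
    rw [if_pos ⟨h1, hmem⟩]
    unfold tY
    have hw' : wgt (q + Finsupp.single c 1 - Finsupp.single (c + 1) 1) = wgt q - 1 := by omega
    rw [hw']
    have hzp : ((zf (q + Finsupp.single c 1 - Finsupp.single (c + 1) 1) : ℝ)) ≠ 0 :=
      Nat.cast_ne_zero.mpr (zf_pos _).ne'
    have hzq : ((zf q : ℝ)) ≠ 0 := Nat.cast_ne_zero.mpr (zf_pos _).ne'
    have hzR : (zf (q + Finsupp.single c 1 - Finsupp.single (c + 1) 1) : ℝ)
        * (((c + 1) : ℝ) * (q (c + 1) : ℝ)) = (zf q : ℝ) * ((q c : ℝ) + 1) := by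
      exact_mod_cast congrArg (Nat.cast : ℕ → ℝ) hz
    push_cast
    field_simp
    first
      | linear_combination ((κ.descFactorial (wgt q - 1) : ℝ)) * hzR
      | linear_combination (-(κ.descFactorial (wgt q - 1) : ℝ)) * hzR
  · have h0 : q (c + 1) = 0 := by omega
    simp [h0, h1]

lemma CX_eval {κ : ℕ} {q : ℕ →₀ ℕ} (hq : q ∈ MM (κ + 1)) {c : ℕ}
    (hc : c ∈ Finset.Icc 1 κ) :
    (if 1 ≤ q (c + 1) ∧ q + Finsupp.single c 1 - Finsupp.single (c + 1) 1 ∈ MM κ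
        then ((q c + 1 : ℕ) : ℝ) * tX κ (q + Finsupp.single c 1 - Finsupp.single (c + 1) 1)
        else 0)
      = (((c + 1) * q (c + 1) : ℕ) : ℝ)
          * (((κ.descFactorial (wgt q - 1 - 1) * (wgt q - 1) : ℕ) : ℝ) / (zf q : ℝ)) := by
  rw [Finset.mem_Icc] at hc
  by_cases h1 : 1 ≤ q (c + 1)
  · obtain ⟨hmem, hw, hd, hz⟩ := C_fact hq hc.1 hc.2 h1
    rw [if_pos ⟨h1, hmem⟩]
    unfold tX
    have hw' : wgt (q + Finsupp.single c 1 - Finsupp.single (c + 1) 1) = wgt q - 1 := by omega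
    rw [hw']
    have hzp : ((zf (q + Finsupp.single c 1 - Finsupp.single (c + 1) 1) : ℝ)) ≠ 0 :=
      Nat.cast_ne_zero.mpr (zf_pos _).ne'
    have hzq : ((zf q : ℝ)) ≠ 0 := Nat.cast_ne_zero.mpr (zf_pos _).ne'
    have hzR : (zf (q + Finsupp.single c 1 - Finsupp.single (c + 1) 1) : ℝ)
        * (((c + 1) : ℝ) * (q (c + 1) : ℝ)) = (zf q : ℝ) * ((q c : ℝ) + 1) := by
      exact_mod_cast congrArg (Nat.cast : ℕ → ℝ) hz
    push_cast
    field_simp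
    first
      | linear_combination ((κ.descFactorial (wgt q - 1 - 1) : ℝ) * ((wgt q - 1 : ℕ) : ℝ)) * hzR
      | linear_combination (-((κ.descFactorial (wgt q - 1 - 1) : ℝ) * ((wgt q - 1 : ℕ) : ℝ))) * hzR
  · have h0 : q (c + 1) = 0 := by omega
    simp [h0, h1]

lemma sum_weights {κ : ℕ} {q : ℕ →₀ ℕ} (hq : q ∈ MM (κ + 1)) :
    q 1 + ∑ c ∈ Finset.Icc 1 κ, (c + 1) * q (c + 1) = wgt q := by
  have h2 : wgt q = ∑ i ∈ Finset.Icc 1 (κ + 1), i * q i := by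
    apply wgt_eq_sum
    intro i hi
    rw [Finsupp.mem_support_iff] at hi
    have := (mem_MM.mp hq).1 i hi
    rw [Finset.mem_Icc]; omega
  have h3 : ∑ c ∈ Finset.Icc 1 κ, (c + 1) * q (c + 1)
      = ∑ i ∈ Finset.Icc 2 (κ + 1), i * q i := by
    rw [show (2 : ℕ) = 1 + 1 by rfl, show κ + 1 = κ + 1 by rfl]
    rw [← Finset.map_add_right_Icc 1 κ 1]
    rw [Finset.sum_map]
    rfl
  have h4 : (1 : ℕ) ∈ Finset.Icc 1 (κ + 1) := by
    rw [Finset.mem_Icc]; omega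
  rw [h2, ← Finset.add_sum_erase _ _ h4]
  have h5 : (Finset.Icc 1 (κ + 1)).erase 1 = Finset.Icc 2 (κ + 1) := by
    rw [Finset.Icc_erase_left]
    rfl
  rw [h5, h3, one_mul]

lemma coeffY {κ : ℕ} {q : ℕ →₀ ℕ} (hq : q ∈ MM (κ + 1)) :
    tY (κ + 1) q
      = (if q ∈ MM κ then tY κ q else 0)
        + (if 1 ≤ q 1 ∧ q - Finsupp.single 1 1 ∈ MM κ then tY κ (q - Finsupp.single 1 1) else 0)
        + ∑ c ∈ Finset.Icc 1 κ,
            (if 1 ≤ q (c + 1) ∧ q + Finsupp.single c 1 - Finsupp.single (c + 1) 1 ∈ MM κ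
              then ((q c + 1 : ℕ) : ℝ) * tY κ (q + Finsupp.single c 1 - Finsupp.single (c + 1) 1)
              else 0) := by
  rw [AY_eval hq, BY_eval hq, Finset.sum_congr rfl (fun c hc => CY_eval hq hc),
    ← Finset.sum_mul]
  have hsw := sum_weights hq
  have hrec := descFactorial_rec κ (wgt q)
  have hzq : ((zf q : ℝ)) ≠ 0 := Nat.cast_ne_zero.mpr (zf_pos _).ne'
  unfold tY
  have hswR : (q 1 : ℝ) + ∑ c ∈ Finset.Icc 1 κ, (((c + 1) * q (c + 1) : ℕ) : ℝ)
      = (wgt q : ℝ) := by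
    exact_mod_cast congrArg (Nat.cast : ℕ → ℝ) hsw
  have hrecR : (((κ + 1).descFactorial (wgt q) : ℕ) : ℝ)
      = (κ.descFactorial (wgt q) : ℝ) + (wgt q : ℝ) * (κ.descFactorial (wgt q - 1) : ℝ) := by
    exact_mod_cast congrArg (Nat.cast : ℕ → ℝ) hrec
  push_cast at hswR hrecR ⊢
  field_simp
  first
    | linear_combination hrecR + (κ.descFactorial (wgt q - 1) : ℝ) * hswR.symm
    | linear_combination hrecR - (κ.descFactorial (wgt q - 1) : ℝ) * hswR.symm
    | linear_combination (zf q : ℝ) * hrecR + (zf q : ℝ) * (κ.descFactorial (wgt q - 1) : ℝ) * hswR.symm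

lemma coeffX {κ : ℕ} {q : ℕ →₀ ℕ} (hq : q ∈ MM (κ + 1)) :
    tX (κ + 1) q
      = (if q ∈ MM κ then tX κ q else 0)
        + (if 1 ≤ q 1 ∧ q - Finsupp.single 1 1 ∈ MM κ then tX κ (q - Finsupp.single 1 1) else 0)
        + ∑ c ∈ Finset.Icc 1 κ,
            (if 1 ≤ q (c + 1) ∧ q + Finsupp.single c 1 - Finsupp.single (c + 1) 1 ∈ MM κ
              then ((q c + 1 : ℕ) : ℝ) * tX κ (q + Finsupp.single c 1 - Finsupp.single (c + 1) 1)
              else 0)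
        + (if q = Finsupp.single (κ + 1) 1 then 1 else 0)
        + (if q = Finsupp.single 1 1 + Finsupp.single (κ + 1) 1 then 1 else 0) := by
  rw [AX_eval hq, BX_eval hq, Finset.sum_congr rfl (fun c hc => CX_eval hq hc),
    ← Finset.sum_mul]
  have hsw := sum_weights hq
  have hrec := descFactorial_rec κ (wgt q - 1)
  have hzq : ((zf q : ℝ)) ≠ 0 := Nat.cast_ne_zero.mpr (zf_pos _).ne'
  unfold tX
  have hswR : (q 1 : ℝ) + ∑ c ∈ Finset.Icc 1 κ, (((c + 1) * q (c + 1) : ℕ) : ℝ)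
      = (wgt q : ℝ) := by
    exact_mod_cast congrArg (Nat.cast : ℕ → ℝ) hsw
  have hrecR : (((κ + 1).descFactorial (wgt q - 1) : ℕ) : ℝ)
      = (κ.descFactorial (wgt q - 1) : ℝ)
        + ((wgt q - 1 : ℕ) : ℝ) * (κ.descFactorial (wgt q - 1 - 1) : ℝ) := by
    exact_mod_cast congrArg (Nat.cast : ℕ → ℝ) hrec
  by_cases hs0 : wgt q = 0
  · -- degenerate: everything with factor `wgt q` vanishes; q = 0
    have hq1 : q 1 = 0 := by
      have := term_le_wgt q 1; omega
    have hqc : ∀ c, q (c + 1) = 0 := by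
      intro c
      have h := term_le_wgt q (c + 1)
      rw [hs0, Nat.le_zero] at h
      rcases Nat.mul_eq_zero.mp h with h' | h'
      · omega
      · exact h' 
    have hne1 : q ≠ Finsupp.single (κ + 1) 1 := by
      rintro rfl; rw [wgt_single] at hs0; omega
    have hne2 : q ≠ Finsupp.single 1 1 + Finsupp.single (κ + 1) 1 := by
      rintro rfl; rw [wgt_add, wgt_single, wgt_single] at hs0; omega
    rw [hs0]
    simp [hq1, hqc, hne1, hne2]
  · -- main computation
    have hs1 : (wgt q : ℝ) - 1 = ((wgt q - 1 : ℕ) : ℝ) := by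
      have : 1 ≤ wgt q := by omega
      push_cast [this]
      ring
    push_cast at hswR hrecR ⊢
    field_simp
    try simp only [hs1] at hrecR
    try simp only [hs1]
    first
      | linear_combination ((wgt q : ℝ)) * hrecR
          + ((wgt q - 1 : ℕ) : ℝ) * (κ.descFactorial (wgt q - 1 - 1) : ℝ) * hswR.symm
      | linear_combination ((wgt q : ℝ)) * hrecR
          - ((wgt q - 1 : ℕ) : ℝ) * (κ.descFactorial (wgt q - 1 - 1) : ℝ) * hswR.symm


end Coeff

-- ===== Part 4 : analytic expansion =====
section Expand
open Finsupp Function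

lemma Jmono_update (m : ℕ →₀ ℕ) (j : ℕ → ℝ) (c : ℕ) (t : ℝ) :
    Jmono m (Function.update j c t)
      = t ^ (m c) * ∏ i ∈ m.support.erase c, (j i) ^ m i := by
  unfold Jmono Finsupp.prod
  by_cases hc : c ∈ m.support
  · rw [← Finset.mul_prod_erase _ _ hc]
    simp only [Function.update_self]
    congr 1
    apply Finset.prod_congr rfl
    intro i hi
    have hne : i ≠ c := Finset.ne_of_mem_erase hi
    simp only [Function.update_of_ne hne]
  · rw [Finset.erase_eq_self.mpr hc]
    have h0 : m c = 0 := Finsupp.notMem_support_iff.mp hc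
    rw [h0, pow_zero, one_mul]
    apply Finset.prod_congr rfl
    intro i hi
    have hne : i ≠ c := by rintro rfl; exact hc hi
    simp only [Function.update_of_ne hne]

lemma Jmono_update_zero {m : ℕ →₀ ℕ} {c : ℕ} (h : m c = 0) (j : ℕ → ℝ) (t : ℝ) :
    Jmono m (Function.update j c t) = Jmono m j := by
  rw [Jmono_update, h, pow_zero, one_mul,
    Finset.erase_eq_self.mpr (Finsupp.notMem_support_iff.mpr h)]
  rfl

lemma diff_Jmono_update (m : ℕ →₀ ℕ) (j : ℕ → ℝ) (c : ℕ) (s : ℝ) :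
    DifferentiableAt ℝ (fun t => Jmono m (Function.update j c t)) s := by
  have : (fun t => Jmono m (Function.update j c t))
      = fun t => t ^ (m c) * ∏ i ∈ m.support.erase c, (j i) ^ m i := by
    funext t; rw [Jmono_update]
  rw [this]
  exact (differentiableAt_pow _).mul_const _

lemma diff_term_t {H : ℝ → ℝ → ℝ} (hH : ContDiff ℝ (⊤ : ℕ∞) (unc H)) (m : ℕ →₀ ℕ)
    (x : ℝ) (j : ℕ → ℝ) (c : ℕ) :
    DifferentiableAt ℝ
      (fun t => H x (Function.update j c t 0) * Jmono m (Function.update j c t)) (j c) := by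
  apply DifferentiableAt.mul
  · by_cases hc : c = 0
    · subst hc
      have : (fun t : ℝ => H x (Function.update j 0 t 0)) = fun t => H x t := by
        funext t; rw [Function.update_self]
      rw [this]
      exact diffY hH x (j 0)
    · have : (fun t : ℝ => H x (Function.update j c t 0)) = fun _ => H x (j 0) := by
        funext t; rw [Function.update_of_ne (Ne.symm hc)]
      rw [this]
      exact differentiableAt_const _
  · exact diff_Jmono_update m j c (j c)

lemma totalD_sum (L : ℕ) (S : Finset (ℕ →₀ ℕ)) (H : (ℕ →₀ ℕ) → ℝ → ℝ → ℝ)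
    (hH : ∀ m ∈ S, ContDiff ℝ (⊤ : ℕ∞) (unc (H m))) (x : ℝ) (j : ℕ → ℝ) :
    totalD L (fun x j => ∑ m ∈ S, H m x (j 0) * Jmono m j) x j
      = ∑ m ∈ S, totalD L (fun x j => H m x (j 0) * Jmono m j) x j := by
  unfold totalD
  have h1 : deriv (fun t => ∑ m ∈ S, H m t (j 0) * Jmono m j) x
      = ∑ m ∈ S, deriv (fun t => H m t (j 0) * Jmono m j) x := by
    apply deriv_fun_sum
    intro m hm
    exact (diffX (hH m hm) x (j 0)).mul_const _
  have h2 : ∀ c ∈ Finset.range L,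
      deriv (fun t => ∑ m ∈ S, H m x (Function.update j c t 0) * Jmono m (Function.update j c t)) (j c)
      = ∑ m ∈ S, deriv (fun t => H m x (Function.update j c t 0) * Jmono m (Function.update j c t)) (j c) := by
    intro c _
    apply deriv_fun_sum
    intro m hm
    exact diff_term_t (hH m hm) m x j c
  rw [h1]
  have h3 : ∑ c ∈ Finset.range L,
        j (c + 1) * deriv (fun t => ∑ m ∈ S, H m x (Function.update j c t 0) * Jmono m (Function.update j c t)) (j c)
      = ∑ c ∈ Finset.range L, ∑ m ∈ S,
        j (c + 1) * deriv (fun t => H m x (Function.update j c t 0) * Jmono m (Function.update j c t)) (j c) := by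
    apply Finset.sum_congr rfl
    intro c hcL
    rw [h2 c hcL, Finset.mul_sum]
  rw [h3, Finset.sum_comm, ← Finset.sum_add_distrib]

lemma sum_Icc_one {M : Type*} [AddCommMonoid M] (f : ℕ → M) (κ : ℕ) :
    ∑ c ∈ Finset.Icc 1 κ, f c = ∑ c ∈ Finset.range κ, f (c + 1) := by
  induction κ with
  | zero => simp
  | succ n ih =>
      rw [Finset.sum_range_succ, ← ih, Finset.sum_Icc_succ_top (by omega)]

lemma totalD_term {H : ℝ → ℝ → ℝ} (hH : ContDiff ℝ (⊤ : ℕ∞) (unc H)) {κ : ℕ} {m : ℕ →₀ ℕ}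
    (hm : ∀ i, m i ≠ 0 → 1 ≤ i ∧ i ≤ κ) (x : ℝ) (j : ℕ → ℝ) :
    totalD (κ + 1) (fun x j => H x (j 0) * Jmono m j) x j
      = pdx H x (j 0) * Jmono m j
        + pdy H x (j 0) * (Jmono m j * j 1)
        + ∑ c ∈ Finset.Icc 1 κ, (m c : ℝ)
            * ((j c) ^ (m c - 1) * (∏ i ∈ m.support.erase c, (j i) ^ m i) * j (c + 1))
            * H x (j 0) := by
  unfold totalD
  have hm0 : m 0 = 0 := by
    by_contra h; have := hm 0 h; omega
  have h1 : deriv (fun t => H t (j 0) * Jmono m j) x = pdx H x (j 0) * Jmono m j := by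
    rw [deriv_mul_const (diffX hH x (j 0))]
    rfl
  have h0 : j 1 * deriv (fun t => H x (Function.update j 0 t 0) * Jmono m (Function.update j 0 t)) (j 0)
      = pdy H x (j 0) * (Jmono m j * j 1) := by
    have e1 : (fun t => H x (Function.update j 0 t 0) * Jmono m (Function.update j 0 t))
        = fun t => H x t * Jmono m j := by
      funext t
      rw [Function.update_self, Jmono_update_zero hm0]
    rw [e1, deriv_mul_const (diffY hH x (j 0))]
    have : deriv (fun t => H x t) (j 0) = pdy H x (j 0) := rfl
    rw [this]; ring
  have hc : ∀ c, 1 ≤ c →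
      j (c + 1) * deriv (fun t => H x (Function.update j c t 0) * Jmono m (Function.update j c t)) (j c)
      = (m c : ℝ) * ((j c) ^ (m c - 1) * (∏ i ∈ m.support.erase c, (j i) ^ m i) * j (c + 1))
          * H x (j 0) := by
    intro c hc1
    have e1 : (fun t => H x (Function.update j c t 0) * Jmono m (Function.update j c t))
        = fun t => H x (j 0) * (t ^ (m c) * ∏ i ∈ m.support.erase c, (j i) ^ m i) := by
      funext t
      rw [Function.update_of_ne (by omega : (0 : ℕ) ≠ c), Jmono_update]
    rw [e1]
    rw [deriv_const_mul _ ((differentiableAt_pow _).mul_const _)]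
    rw [deriv_mul_const (differentiableAt_pow _), deriv_pow_field]
    ring
  rw [h1, Finset.sum_range_succ', h0]
  have : ∀ c ∈ Finset.range κ,
      j (c + 1 + 1) * deriv (fun t => H x (Function.update j (c + 1) t 0) * Jmono m (Function.update j (c + 1) t)) (j (c + 1))
      = (m (c + 1) : ℝ) * ((j (c + 1)) ^ (m (c + 1) - 1) * (∏ i ∈ m.support.erase (c + 1), (j i) ^ m i) * j (c + 1 + 1))
          * H x (j 0) := by
    intro c _
    exact hc (c + 1) (by omega)
  rw [Finset.sum_congr rfl this, sum_Icc_one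
    (fun c => (m c : ℝ) * ((j c) ^ (m c - 1) * (∏ i ∈ m.support.erase c, (j i) ^ m i) * j (c + 1)) * H x (j 0)) κ]
  ring

end Expand


-- ===== Part 5 : the canonical coefficient functions =====
section Hf
open Finsupp

variable (X Y : ℝ → ℝ → ℝ)

noncomputable def Hf (κ : ℕ) (m : ℕ →₀ ℕ) : ℝ → ℝ → ℝ :=
  fun x y => tY κ m * pd (κ - wgt m) (deg m) Y x y
    - tX κ m * pd (κ + 1 - wgt m) (deg m - 1) X x y

variable {X Y}
variable (hX : ContDiff ℝ (⊤ : ℕ∞) (unc X)) (hY : ContDiff ℝ (⊤ : ℕ∞) (unc Y))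

include hX hY in
lemma smooth_Hf (κ : ℕ) (m : ℕ →₀ ℕ) : ContDiff ℝ (⊤ : ℕ∞) (unc (Hf X Y κ m)) := by
  show ContDiff ℝ (⊤ : ℕ∞) (fun p : ℝ × ℝ =>
    tY κ m * unc (pd (κ - wgt m) (deg m) Y) p
      - tX κ m * unc (pd (κ + 1 - wgt m) (deg m - 1) X) p)
  exact (contDiff_const.mul (smooth_pd hY _ _)).sub (contDiff_const.mul (smooth_pd hX _ _))

include hX hY in
lemma pdx_Hf (κ : ℕ) (m : ℕ →₀ ℕ) :
    pdx (Hf X Y κ m) = fun x y =>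
      tY κ m * pd ((κ - wgt m) + 1) (deg m) Y x y
        - tX κ m * pd ((κ + 1 - wgt m) + 1) (deg m - 1) X x y := by
  funext x y
  show deriv (fun t => tY κ m * pd (κ - wgt m) (deg m) Y t y
    - tX κ m * pd (κ + 1 - wgt m) (deg m - 1) X t y) x = _
  rw [deriv_fun_sub ((diffX (smooth_pd hY _ _) x y).const_mul _)
      ((diffX (smooth_pd hX _ _) x y).const_mul _),
    deriv_const_mul _ (diffX (smooth_pd hY _ _) x y),
    deriv_const_mul _ (diffX (smooth_pd hX _ _) x y)]
  rw [pd_succ_x, pd_succ_x]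
  rfl

include hX hY in
lemma pdy_Hf (κ : ℕ) (m : ℕ →₀ ℕ) :
    pdy (Hf X Y κ m) = fun x y =>
      tY κ m * pd (κ - wgt m) (deg m + 1) Y x y
        - tX κ m * pd (κ + 1 - wgt m) ((deg m - 1) + 1) X x y := by
  funext x y
  show deriv (fun t => tY κ m * pd (κ - wgt m) (deg m) Y x t
    - tX κ m * pd (κ + 1 - wgt m) (deg m - 1) X x t) y = _
  rw [deriv_fun_sub ((diffY (smooth_pd hY _ _) x y).const_mul _)
      ((diffY (smooth_pd hX _ _) x y).const_mul _),
    deriv_const_mul _ (diffY (smooth_pd hY _ _) x y),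
    deriv_const_mul _ (diffY (smooth_pd hX _ _) x y)]
  rw [pd_succ_y hY, pd_succ_y hX]
  rfl

lemma tY_top {κ : ℕ} {m : ℕ →₀ ℕ} (h : wgt m = κ + 1) : tY κ m = 0 := by
  unfold tY
  rw [h, Nat.descFactorial_eq_zero_iff_lt.mpr (by omega)]
  simp

lemma deg_eq_zero_iff {m : ℕ →₀ ℕ} : deg m = 0 ↔ m = 0 := by
  constructor
  · intro h
    ext i
    by_cases hi : m i = 0
    · simp [hi]
    · exfalso
      unfold deg Finsupp.sum at h
      have h2 := Finset.sum_eq_zero_iff.mp h i (Finsupp.mem_support_iff.mpr hi)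
      exact hi h2
  · rintro rfl; exact deg_zero

lemma tX_zero_of_deg {κ : ℕ} {m : ℕ →₀ ℕ} (h : deg m = 0) : tX κ m = 0 := by
  have : m = 0 := deg_eq_zero_iff.mp h
  subst this
  unfold tX
  rw [wgt_zero]
  simp

lemma Jmono_add_single (m : ℕ →₀ ℕ) (c : ℕ) (j : ℕ → ℝ) :
    Jmono (m + Finsupp.single c 1) j = Jmono m j * j c := by
  unfold Jmono
  rw [Finsupp.prod_add_index' (by simp) (fun a b1 b2 => pow_add _ _ _)]
  rw [Finsupp.prod_single_index (by simp)]
  rw [pow_one]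

lemma Jmono_single (c : ℕ) (j : ℕ → ℝ) : Jmono (Finsupp.single c 1) j = j c := by
  unfold Jmono
  rw [Finsupp.prod_single_index (by simp), pow_one]

lemma Jmono_sub {m : ℕ →₀ ℕ} {c : ℕ} (h : 1 ≤ m c) (j : ℕ → ℝ) :
    Jmono (m - Finsupp.single c 1) j
      = (j c) ^ (m c - 1) * ∏ i ∈ m.support.erase c, (j i) ^ m i := by
  have hsupp : (m - Finsupp.single c 1).support ⊆ m.support := by
    intro i hi
    rw [Finsupp.mem_support_iff, Finsupp.tsub_apply] at hi
    rw [Finsupp.mem_support_iff]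
    omega
  rw [Jmono_eq_prod hsupp]
  have hc : c ∈ m.support := Finsupp.mem_support_iff.mpr (by omega)
  rw [← Finset.mul_prod_erase _ _ hc]
  have e1 : ((m - Finsupp.single c 1 : ℕ →₀ ℕ)) c = m c - 1 := by
    rw [Finsupp.tsub_apply, Finsupp.single_apply]; simp
  rw [e1]
  congr 1
  apply Finset.prod_congr rfl
  intro i hi
  have : i ≠ c := Finset.ne_of_mem_erase hi
  rw [Finsupp.tsub_apply, Finsupp.single_apply]
  simp [Ne.symm this]

end Hf


-- ===== Part 6 : reindexing and the main induction =====
section Main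
open Finsupp

variable (X Y : ℝ → ℝ → ℝ)

noncomputable def PYf (κ : ℕ) (x : ℝ) (j : ℕ → ℝ) (q : ℕ →₀ ℕ) : ℝ :=
  pd (κ + 1 - wgt q) (deg q) Y x (j 0)

noncomputable def PXf (κ : ℕ) (x : ℝ) (j : ℕ → ℝ) (q : ℕ →₀ ℕ) : ℝ :=
  pd (κ + 2 - wgt q) (deg q - 1) X x (j 0)

noncomputable def TAf (κ : ℕ) (x : ℝ) (j : ℕ → ℝ) (q : ℕ →₀ ℕ) : ℝ :=
  ((if q ∈ MM κ then tY κ q else 0) * PYf Y κ x j q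
    - (if q ∈ MM κ then tX κ q else 0) * PXf X κ x j q) * Jmono q j

noncomputable def TBf (κ : ℕ) (x : ℝ) (j : ℕ → ℝ) (q : ℕ →₀ ℕ) : ℝ :=
  ((if 1 ≤ q 1 ∧ q - Finsupp.single 1 1 ∈ MM κ then tY κ (q - Finsupp.single 1 1) else 0)
      * PYf Y κ x j q
    - (if 1 ≤ q 1 ∧ q - Finsupp.single 1 1 ∈ MM κ then tX κ (q - Finsupp.single 1 1) else 0)
      * PXf X κ x j q) * Jmono q j

noncomputable def TCf (κ : ℕ) (x : ℝ) (j : ℕ → ℝ) (c : ℕ) (q : ℕ →₀ ℕ) : ℝ :=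
  ((if 1 ≤ q (c + 1) ∧ q + Finsupp.single c 1 - Finsupp.single (c + 1) 1 ∈ MM κ
      then ((q c + 1 : ℕ) : ℝ) * tY κ (q + Finsupp.single c 1 - Finsupp.single (c + 1) 1) else 0)
      * PYf Y κ x j q
    - (if 1 ≤ q (c + 1) ∧ q + Finsupp.single c 1 - Finsupp.single (c + 1) 1 ∈ MM κ
      then ((q c + 1 : ℕ) : ℝ) * tX κ (q + Finsupp.single c 1 - Finsupp.single (c + 1) 1) else 0)
      * PXf X κ x j q) * Jmono q j

variable {X Y}
variable (hX : ContDiff ℝ (⊤ : ℕ∞) (unc X)) (hY : ContDiff ℝ (⊤ : ℕ∞) (unc Y))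

include hX hY in
lemma A_step (κ : ℕ) (x : ℝ) (j : ℕ → ℝ) :
    ∑ m ∈ MM κ, pdx (Hf X Y κ m) x (j 0) * Jmono m j
      = ∑ q ∈ MM (κ + 1), TAf X Y κ x j q := by
  have h1 : ∀ m ∈ MM κ, pdx (Hf X Y κ m) x (j 0) * Jmono m j = TAf X Y κ x j m := by
    intro m hm
    unfold TAf PYf PXf
    rw [if_pos hm, if_pos hm]
    simp only [pdx_Hf hX hY]
    have hwle : wgt m ≤ κ + 1 := wgt_le_of_mem hm
    have ex : (κ + 1 - wgt m) + 1 = κ + 2 - wgt m := by omega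
    rw [ex]
    by_cases hw : wgt m ≤ κ
    · have ey : (κ - wgt m) + 1 = κ + 1 - wgt m := by omega
      rw [ey]
    · have hw1 : wgt m = κ + 1 := by omega
      rw [tY_top hw1]
      ring
  rw [Finset.sum_congr rfl h1]
  exact Finset.sum_subset (MM_mono κ) (fun q _ hq => by unfold TAf; simp [hq])

lemma add1_mem {κ : ℕ} {m : ℕ →₀ ℕ} (hm : m ∈ MM κ) :
    m + Finsupp.single 1 1 ∈ MM (κ + 1) := by
  rw [mem_MM] at hm ⊢
  constructor
  · intro i hi
    rw [add_single_apply] at hi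
    by_cases h1 : (1 : ℕ) = i
    · omega
    · simp only [h1, if_false, add_zero] at hi
      have := hm.1 i hi
      omega
  · rw [wgt_add, wgt_single]
    have := hm.2
    omega

include hX hY in
lemma B_step (κ : ℕ) (x : ℝ) (j : ℕ → ℝ) :
    ∑ m ∈ MM κ, pdy (Hf X Y κ m) x (j 0) * (Jmono m j * j 1)
      = ∑ q ∈ MM (κ + 1), TBf X Y κ x j q := by
  have h1 : ∀ m ∈ MM κ, pdy (Hf X Y κ m) x (j 0) * (Jmono m j * j 1)
      = TBf X Y κ x j (m + Finsupp.single 1 1) := by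
    intro m hm
    have hP : 1 ≤ (m + Finsupp.single 1 1 : ℕ →₀ ℕ) 1
        ∧ (m + Finsupp.single 1 1) - Finsupp.single 1 1 ∈ MM κ := by
      constructor
      · rw [add_single_apply]; simp
      · rw [add_sub_single]; exact hm
    unfold TBf PYf PXf
    rw [if_pos hP, if_pos hP, add_sub_single]
    simp only [pdy_Hf hX hY]
    have hw : wgt (m + Finsupp.single 1 1) = wgt m + 1 := by
      rw [wgt_add, wgt_single]
    have hd : deg (m + Finsupp.single 1 1) = deg m + 1 := by
      rw [deg_add, deg_single]
    have hj : Jmono (m + Finsupp.single 1 1) j = Jmono m j * j 1 :=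
      Jmono_add_single m 1 j
    rw [hw, hd, hj]
    have e1 : κ + 1 - (wgt m + 1) = κ - wgt m := by omega
    have e2 : κ + 2 - (wgt m + 1) = κ + 1 - wgt m := by omega
    have e3 : deg m + 1 - 1 = deg m := by omega
    rw [e1, e2, e3]
    by_cases hdm : 1 ≤ deg m
    · have e4 : (deg m - 1) + 1 = deg m := by omega
      rw [e4]
    · have hd0 : deg m = 0 := by omega
      rw [tX_zero_of_deg hd0]
      ring
  rw [Finset.sum_congr rfl h1]
  have h2 : ∀ q ∈ MM (κ + 1),
      TBf X Y κ x j q =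
        if 1 ≤ q 1 ∧ q - Finsupp.single 1 1 ∈ MM κ then TBf X Y κ x j q else 0 := by
    intro q _
    by_cases hP : 1 ≤ q 1 ∧ q - Finsupp.single 1 1 ∈ MM κ
    · rw [if_pos hP]
    · rw [if_neg hP]
      unfold TBf
      rw [if_neg hP, if_neg hP]
      ring
  rw [Finset.sum_congr rfl h2, ← Finset.sum_filter]
  refine Finset.sum_bij' (fun m _ => m + Finsupp.single 1 1)
    (fun q _ => q - Finsupp.single 1 1) ?_ ?_ ?_ ?_ ?_
  · intro m hm
    simp only [Finset.mem_filter]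
    refine ⟨add1_mem hm, ?_, ?_⟩
    · rw [add_single_apply]; simp
    · rw [add_sub_single]; exact hm
  · intro q hq
    simp only [Finset.mem_filter] at hq
    exact hq.2.2
  · intro m hm
    exact add_sub_single m 1
  · intro q hq
    simp only [Finset.mem_filter] at hq
    exact sub_add_single hq.2.1
  · intro m hm
    rfl

lemma move_fwd {κ c : ℕ} {m : ℕ →₀ ℕ} (hm : m ∈ MM κ) (hc1 : 1 ≤ c) (hc2 : c ≤ κ)
    (h : 1 ≤ m c) :
    (m - Finsupp.single c 1 + Finsupp.single (c + 1) 1) ∈ MM (κ + 1)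
    ∧ ((m - Finsupp.single c 1 + Finsupp.single (c + 1) 1 : ℕ →₀ ℕ)) (c + 1) = m (c + 1) + 1
    ∧ ((m - Finsupp.single c 1 + Finsupp.single (c + 1) 1 : ℕ →₀ ℕ)) c = m c - 1
    ∧ (m - Finsupp.single c 1 + Finsupp.single (c + 1) 1) + Finsupp.single c 1
        - Finsupp.single (c + 1) 1 = m
    ∧ wgt (m - Finsupp.single c 1 + Finsupp.single (c + 1) 1) = wgt m + 1
    ∧ deg (m - Finsupp.single c 1 + Finsupp.single (c + 1) 1) = deg m := by
  set r := m - Finsupp.single c 1 with hr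
  have hrm : r + Finsupp.single c 1 = m := sub_add_single h
  have hrc : r c = m c - 1 := by
    rw [hr, Finsupp.tsub_apply, Finsupp.single_apply]; simp
  have hrc1 : r (c + 1) = m (c + 1) := by
    rw [hr, Finsupp.tsub_apply, Finsupp.single_apply]
    have : ¬ (c = c + 1) := by omega
    simp [this]
  have hwm : wgt m = wgt r + c := by
    rw [← hrm, wgt_add, wgt_single]; ring
  have hdm : deg m = deg r + 1 := by
    rw [← hrm, deg_add, deg_single]
  refine ⟨?_, ?_, ?_, ?_, ?_, ?_⟩
  · rw [mem_MM]
    constructor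
    · intro i hi
      rw [add_single_apply] at hi
      by_cases hi1 : c + 1 = i
      · omega
      · simp only [hi1, if_false, add_zero] at hi
        rw [hr, Finsupp.tsub_apply] at hi
        have := (mem_MM.mp hm).1 i (by omega)
        omega
    · rw [wgt_add, wgt_single]
      have := (mem_MM.mp hm).2
      omega
  · rw [add_single_apply, hrc1]; simp
  · rw [add_single_apply, hrc]
    have : ¬ (c + 1 = c) := by omega
    simp [this]
  · rw [add_right_comm, hrm, add_sub_single]
  · rw [wgt_add, wgt_single]; omega
  · rw [deg_add, deg_single]; omega

lemma move_back {c : ℕ} {q : ℕ →₀ ℕ} (h1 : 1 ≤ q (c + 1)) :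
    ((q + Finsupp.single c 1 - Finsupp.single (c + 1) 1 : ℕ →₀ ℕ)) c = q c + 1
    ∧ (q + Finsupp.single c 1 - Finsupp.single (c + 1) 1) - Finsupp.single c 1
        + Finsupp.single (c + 1) 1 = q := by
  set r := q - Finsupp.single (c + 1) 1 with hr
  have hrq : r + Finsupp.single (c + 1) 1 = q := sub_add_single h1
  have hp : q + Finsupp.single c 1 - Finsupp.single (c + 1) 1 = r + Finsupp.single c 1 := by
    conv_lhs => rw [← hrq]
    rw [add_right_comm, add_sub_single]
  have hrc : r c = q c := by
    rw [hr, Finsupp.tsub_apply, Finsupp.single_apply]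
    have : ¬ (c + 1 = c) := by omega
    simp [this]
  constructor
  · rw [hp, add_single_apply, hrc]; simp
  · rw [hp, add_sub_single, hrq]

include hX hY in
omit hX hY in
lemma C_step (κ : ℕ) (x : ℝ) (j : ℕ → ℝ) {c : ℕ} (hc : c ∈ Finset.Icc 1 κ) :
    ∑ m ∈ MM κ, (m c : ℝ)
        * ((j c) ^ (m c - 1) * (∏ i ∈ m.support.erase c, (j i) ^ m i) * j (c + 1))
        * Hf X Y κ m x (j 0)
      = ∑ q ∈ MM (κ + 1), TCf X Y κ x j c q := by
  rw [Finset.mem_Icc] at hc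
  rw [← Finset.sum_filter_of_ne (p := fun m => 1 ≤ m c) (by
    intro m _ hne
    by_contra hle
    have h0 : m c = 0 := by omega
    rw [h0] at hne
    simp at hne)]
  have h2 : ∀ q ∈ MM (κ + 1),
      TCf X Y κ x j c q =
        if 1 ≤ q (c + 1) ∧ q + Finsupp.single c 1 - Finsupp.single (c + 1) 1 ∈ MM κ
          then TCf X Y κ x j c q else 0 := by
    intro q _
    by_cases hP : 1 ≤ q (c + 1) ∧ q + Finsupp.single c 1 - Finsupp.single (c + 1) 1 ∈ MM κ
    · rw [if_pos hP]
    · rw [if_neg hP]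
      unfold TCf
      rw [if_neg hP, if_neg hP]
      ring
  rw [Finset.sum_congr rfl h2, ← Finset.sum_filter]
  refine Finset.sum_bij' (fun m _ => m - Finsupp.single c 1 + Finsupp.single (c + 1) 1)
    (fun q _ => q + Finsupp.single c 1 - Finsupp.single (c + 1) 1) ?_ ?_ ?_ ?_ ?_
  · intro m hm
    simp only [Finset.mem_filter] at hm ⊢
    obtain ⟨hmem, hfwd1, hfwd2, hfwd3, hfwd4, hfwd5⟩ := move_fwd hm.1 hc.1 hc.2 hm.2
    refine ⟨hmem, ?_, ?_⟩
    · rw [hfwd1]; omega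
    · rw [hfwd3]; exact hm.1
  · intro q hq
    simp only [Finset.mem_filter] at hq ⊢
    refine ⟨hq.2.2, ?_⟩
    rw [(move_back hq.2.1).1]
    omega
  · intro m hm
    simp only [Finset.mem_filter] at hm
    exact (move_fwd hm.1 hc.1 hc.2 hm.2).2.2.2.1
  · intro q hq
    simp only [Finset.mem_filter] at hq
    exact (move_back hq.2.1).2
  · intro m hm
    simp only [Finset.mem_filter] at hm
    obtain ⟨hmem, hv1, hv2, hv3, hv4, hv5⟩ := move_fwd hm.1 hc.1 hc.2 hm.2
    show _ = TCf X Y κ x j c (m - Finsupp.single c 1 + Finsupp.single (c + 1) 1)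
    unfold TCf PYf PXf
    have hP : 1 ≤ ((m - Finsupp.single c 1 + Finsupp.single (c + 1) 1 : ℕ →₀ ℕ)) (c + 1)
        ∧ (m - Finsupp.single c 1 + Finsupp.single (c + 1) 1) + Finsupp.single c 1
            - Finsupp.single (c + 1) 1 ∈ MM κ := by
      refine ⟨by rw [hv1]; omega, by rw [hv3]; exact hm.1⟩
    rw [if_pos hP, if_pos hP, hv3, hv2, hv4, hv5]
    have hq1 : m c - 1 + 1 = m c := by omega
    rw [hq1]
    have e1 : κ + 1 - (wgt m + 1) = κ - wgt m := by omega
    have e2 : κ + 2 - (wgt m + 1) = κ + 1 - wgt m := by omega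
    rw [e1, e2]
    have hj : Jmono (m - Finsupp.single c 1 + Finsupp.single (c + 1) 1) j
        = (j c) ^ (m c - 1) * (∏ i ∈ m.support.erase c, (j i) ^ m i) * j (c + 1) := by
      rw [Jmono_add_single, Jmono_sub hm.2]
    rw [hj]
    unfold Hf
    ring

lemma totalD_one_X (x : ℝ) (j : ℕ → ℝ) :
    totalD 1 (fun x' j' => X x' (j' 0)) x j
      = pd 1 0 X x (j 0) + j 1 * pd 0 1 X x (j 0) := by
  unfold totalD
  rw [Finset.sum_range_one]
  have e : (fun t => X x (Function.update j 0 t 0)) = fun t => X x t := by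
    funext t; rw [Function.update_self]
  rw [e]
  have e1 : deriv (fun t => X t (j 0)) x = pd 1 0 X x (j 0) := rfl
  have e2 : deriv (fun t => X x t) (j 0) = pd 0 1 X x (j 0) := rfl
  rw [e1, e2]

end Main


-- ===== Part 7 : main theorem =====
section Final
open Finsupp

variable {X Y : ℝ → ℝ → ℝ}
variable (hX : ContDiff ℝ (⊤ : ℕ∞) (unc X)) (hY : ContDiff ℝ (⊤ : ℕ∞) (unc Y))

lemma MM_zero : MM 0 = {0} := by
  ext m
  rw [mem_MM, Finset.mem_singleton]
  constructor
  · rintro ⟨h1, _⟩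
    ext i
    by_contra hne
    have := h1 i (by simpa using hne)
    omega
  · rintro rfl
    refine ⟨fun i hi => by simp at hi, by rw [wgt_zero]; omega⟩

lemma corr_sum (κ : ℕ) (x : ℝ) (j : ℕ → ℝ) :
    ∑ q ∈ MM (κ + 1),
        ((if q = Finsupp.single (κ + 1) 1 then PXf X κ x j q * Jmono q j else 0)
          + (if q = Finsupp.single 1 1 + Finsupp.single (κ + 1) 1
              then PXf X κ x j q * Jmono q j else 0))
      = (pd 1 0 X x (j 0) + j 1 * pd 0 1 X x (j 0)) * j (κ + 1) := by
  rw [Finset.sum_add_distrib, Finset.sum_ite_eq' (MM (κ + 1)) (Finsupp.single (κ + 1) 1),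
    Finset.sum_ite_eq' (MM (κ + 1)) (Finsupp.single 1 1 + Finsupp.single (κ + 1) 1),
    if_pos (single_mem_MM_succ κ), if_pos (two_mem_MM_succ κ)]
  have hw1 : wgt (Finsupp.single (κ + 1) 1) = κ + 1 := by rw [wgt_single]; ring
  have hd1 : deg (Finsupp.single (κ + 1) 1) = 1 := deg_single _ _
  have hw2 : wgt (Finsupp.single 1 1 + Finsupp.single (κ + 1) 1) = κ + 2 := by
    rw [wgt_add, wgt_single, wgt_single]; ring
  have hd2 : deg (Finsupp.single 1 1 + Finsupp.single (κ + 1) 1) = 2 := by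
    rw [deg_add, deg_single, deg_single]
  unfold PXf
  rw [hw1, hd1, hw2, hd2]
  have e1 : κ + 2 - (κ + 1) = 1 := by omega
  have e2 : κ + 2 - (κ + 2) = 0 := by omega
  rw [e1, e2]
  rw [Jmono_single, Jmono_add_single, Jmono_single]
  norm_num
  ring

lemma per_q (κ : ℕ) (x : ℝ) (j : ℕ → ℝ) {q : ℕ →₀ ℕ} (hq : q ∈ MM (κ + 1)) :
    TAf X Y κ x j q + TBf X Y κ x j q + ∑ c ∈ Finset.Icc 1 κ, TCf X Y κ x j c q
      - ((if q = Finsupp.single (κ + 1) 1 then PXf X κ x j q * Jmono q j else 0)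
        + (if q = Finsupp.single 1 1 + Finsupp.single (κ + 1) 1
            then PXf X κ x j q * Jmono q j else 0))
      = Hf X Y (κ + 1) q x (j 0) * Jmono q j := by
  have hC : ∑ c ∈ Finset.Icc 1 κ, TCf X Y κ x j c q
      = (∑ c ∈ Finset.Icc 1 κ,
          (if 1 ≤ q (c + 1) ∧ q + Finsupp.single c 1 - Finsupp.single (c + 1) 1 ∈ MM κ
            then ((q c + 1 : ℕ) : ℝ) * tY κ (q + Finsupp.single c 1 - Finsupp.single (c + 1) 1)
            else 0)) * (PYf Y κ x j q * Jmono q j)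
        - (∑ c ∈ Finset.Icc 1 κ,
          (if 1 ≤ q (c + 1) ∧ q + Finsupp.single c 1 - Finsupp.single (c + 1) 1 ∈ MM κ
            then ((q c + 1 : ℕ) : ℝ) * tX κ (q + Finsupp.single c 1 - Finsupp.single (c + 1) 1)
            else 0)) * (PXf X κ x j q * Jmono q j) := by
    rw [Finset.sum_mul, Finset.sum_mul, ← Finset.sum_sub_distrib]
    apply Finset.sum_congr rfl
    intro c _
    unfold TCf
    ring
  rw [hC]
  unfold Hf TAf TBf
  have e0 : κ + 1 + 1 - wgt q = κ + 2 - wgt q := by omega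
  rw [e0]
  have ePY : pd (κ + 1 - wgt q) (deg q) Y x (j 0) = PYf Y κ x j q := rfl
  have ePX : pd (κ + 2 - wgt q) (deg q - 1) X x (j 0) = PXf X κ x j q := rfl
  rw [ePY, ePX, coeffY hq, coeffX hq]
  have hc1 : (if q = Finsupp.single (κ + 1) 1 then PXf X κ x j q * Jmono q j else 0)
      = (if q = Finsupp.single (κ + 1) 1 then (1 : ℝ) else 0)
          * (PXf X κ x j q * Jmono q j) := by
    split_ifs <;> ring
  have hc2 : (if q = Finsupp.single 1 1 + Finsupp.single (κ + 1) 1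
        then PXf X κ x j q * Jmono q j else 0)
      = (if q = Finsupp.single 1 1 + Finsupp.single (κ + 1) 1 then (1 : ℝ) else 0)
          * (PXf X κ x j q * Jmono q j) := by
    split_ifs <;> ring
  rw [hc1, hc2]
  ring

include hX hY in
theorem main (κ : ℕ) :
    ∀ (x : ℝ) (j : ℕ → ℝ),
      prolong X Y κ x j = ∑ m ∈ MM κ, Hf X Y κ m x (j 0) * Jmono m j := by
  induction κ with
  | zero =>
      intro x j
      rw [MM_zero, Finset.sum_singleton]
      show Y x (j 0) = _
      unfold Hf tY tX
      rw [wgt_zero, deg_zero, zf_zero, Jmono_zero]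
      norm_num
      rfl
  | succ κ IH =>
      intro x j
      have hprol : prolong X Y κ
          = fun x j => ∑ m ∈ MM κ, Hf X Y κ m x (j 0) * Jmono m j :=
        funext fun a => funext fun b => IH a b
      show totalD (κ + 1) (prolong X Y κ) x j
          - totalD 1 (fun x' j' => X x' (j' 0)) x j * j (κ + 1) = _
      rw [hprol, totalD_sum (κ + 1) (MM κ) (Hf X Y κ) (fun m _ => smooth_Hf hX hY κ m) x j]
      rw [Finset.sum_congr rfl
        (fun m hm => totalD_term (smooth_Hf hX hY κ m) ((mem_MM.mp hm).1) x j)]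
      rw [Finset.sum_add_distrib, Finset.sum_add_distrib]
      rw [A_step hX hY κ x j, B_step hX hY κ x j]
      have hCsum : ∑ m ∈ MM κ, ∑ c ∈ Finset.Icc 1 κ,
            (m c : ℝ) * ((j c) ^ (m c - 1) * (∏ i ∈ m.support.erase c, (j i) ^ m i) * j (c + 1))
              * Hf X Y κ m x (j 0)
          = ∑ q ∈ MM (κ + 1), ∑ c ∈ Finset.Icc 1 κ, TCf X Y κ x j c q := by
        rw [Finset.sum_comm]
        rw [Finset.sum_congr rfl (fun c hc => C_step κ x j hc)]
        rw [Finset.sum_comm]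
      rw [hCsum, totalD_one_X x j, ← corr_sum κ x j]
      rw [← Finset.sum_add_distrib, ← Finset.sum_add_distrib, ← Finset.sum_sub_distrib]
      exact Finset.sum_congr rfl (fun q hq => per_q κ x j hq)

end Final


-- ===== Part 8 : reindexing to the statement's format =====
section Reindex
open Finsupp

noncomputable def toF (d : ℕ) (lam mu : Fin d → ℕ) : ℕ →₀ ℕ :=
  ∑ e, Finsupp.single (lam e) (mu e)

lemma toF_apply (d : ℕ) (lam mu : Fin d → ℕ) (i : ℕ) :
    toF d lam mu i = ∑ e, if lam e = i then mu e else 0 := by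
  unfold toF
  rw [Finsupp.finset_sum_apply]
  apply Finset.sum_congr rfl
  intro e _
  rw [Finsupp.single_apply]

lemma toF_at {d : ℕ} {lam : Fin d → ℕ} (hinj : Function.Injective lam)
    (mu : Fin d → ℕ) (e₀ : Fin d) : toF d lam mu (lam e₀) = mu e₀ := by
  rw [toF_apply]
  rw [Finset.sum_eq_single e₀]
  · rw [if_pos rfl]
  · intro e _ hne
    rw [if_neg (fun h => hne (hinj h))]
  · intro h
    exact absurd (Finset.mem_univ e₀) h

lemma toF_not {d : ℕ} {lam mu : Fin d → ℕ} {i : ℕ} (h : ∀ e, lam e ≠ i) :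
    toF d lam mu i = 0 := by
  rw [toF_apply]
  exact Finset.sum_eq_zero (fun e _ => if_neg (h e))

def wgtHom : (ℕ →₀ ℕ) →+ ℕ := ⟨⟨wgt, wgt_zero⟩, wgt_add⟩
def degHom : (ℕ →₀ ℕ) →+ ℕ := ⟨⟨deg, deg_zero⟩, deg_add⟩

lemma wgt_toF (d : ℕ) (lam mu : Fin d → ℕ) :
    wgt (toF d lam mu) = ∑ e, mu e * lam e := by
  have : wgt (toF d lam mu) = wgtHom (∑ e, Finsupp.single (lam e) (mu e)) := rfl
  rw [this, map_sum]
  apply Finset.sum_congr rfl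
  intro e _
  show wgt (Finsupp.single (lam e) (mu e)) = _
  rw [wgt_single]; ring

lemma deg_toF (d : ℕ) (lam mu : Fin d → ℕ) :
    deg (toF d lam mu) = ∑ e, mu e := by
  have : deg (toF d lam mu) = degHom (∑ e, Finsupp.single (lam e) (mu e)) := rfl
  rw [this, map_sum]
  apply Finset.sum_congr rfl
  intro e _
  show deg (Finsupp.single (lam e) (mu e)) = _
  rw [deg_single]

lemma support_toF {d : ℕ} {lam : Fin d → ℕ} (hinj : Function.Injective lam)
    {mu : Fin d → ℕ} (hmu : ∀ e, 1 ≤ mu e) :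
    (toF d lam mu).support = Finset.image lam Finset.univ := by
  ext i
  rw [Finsupp.mem_support_iff, Finset.mem_image]
  constructor
  · intro h
    by_contra hcon
    push_neg at hcon
    exact h (toF_not (fun e => hcon e (Finset.mem_univ e)))
  · rintro ⟨e, _, rfl⟩
    rw [toF_at hinj]
    have := hmu e
    omega

lemma zf_toF {d : ℕ} {lam : Fin d → ℕ} (hinj : Function.Injective lam)
    {mu : Fin d → ℕ} (hmu : ∀ e, 1 ≤ mu e) :
    zf (toF d lam mu) = ∏ e, (Nat.factorial (lam e)) ^ (mu e) * Nat.factorial (mu e) := by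
  unfold zf Finsupp.prod
  rw [support_toF hinj hmu, Finset.prod_image (fun a _ b _ h => hinj h)]
  apply Finset.prod_congr rfl
  intro e _
  rw [toF_at hinj]

lemma Jmono_toF {d : ℕ} {lam : Fin d → ℕ} (hinj : Function.Injective lam)
    {mu : Fin d → ℕ} (hmu : ∀ e, 1 ≤ mu e) (j : ℕ → ℝ) :
    Jmono (toF d lam mu) j = ∏ e, (j (lam e)) ^ (mu e) := by
  unfold Jmono Finsupp.prod
  rw [support_toF hinj hmu, Finset.prod_image (fun a _ b _ h => hinj h)]
  apply Finset.prod_congr rfl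
  intro e _
  rw [toF_at hinj]

lemma triple_ext {d d' : ℕ} (h : d = d') {lam mu : Fin d → ℕ} {lam' mu' : Fin d' → ℕ}
    (hl : ∀ e : Fin d', lam (Fin.cast h.symm e) = lam' e)
    (hm : ∀ e : Fin d', mu (Fin.cast h.symm e) = mu' e) :
    (⟨d, lam, mu⟩ : Σ d : ℕ, Σ _ : Fin d → ℕ, Fin d → ℕ) = ⟨d', lam', mu'⟩ := by
  subst h
  have h1 : lam = lam' := funext fun e => hl e
  have h2 : mu = mu' := funext fun e => hm e
  rw [h1, h2]

lemma support_eq_image {m : ℕ →₀ ℕ} :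
    m.support = Finset.image (fun e => m.support.orderEmbOfFin rfl e) Finset.univ := by
  apply Finset.coe_injective
  rw [Finset.coe_image, Finset.coe_univ, Set.image_univ]
  exact (Finset.range_orderEmbOfFin m.support rfl).symm

end Reindex


end PCF


open PCF in
/-- Closed formula for the κ-th prolongation coefficient `𝐘_κ` (one independent and one
dependent variable). -/
theorem prolongation_closed_formula
    (X Y : ℝ → ℝ → ℝ)
    (hX : ContDiff ℝ (⊤ : ℕ∞) (fun p : ℝ × ℝ => X p.1 p.2))
    (hY : ContDiff ℝ (⊤ : ℕ∞) (fun p : ℝ × ℝ => Y p.1 p.2))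
    (κ : ℕ) (hκ : 1 ≤ κ) (x : ℝ) (j : ℕ → ℝ) :
    prolong X Y κ x j =
      pd κ 0 Y x (j 0)
      + ∑ d ∈ Finset.Icc 1 (κ + 1),
        ∑ lam ∈ (Fintype.piFinset fun _ : Fin d => Finset.Icc 1 κ).filter
            (fun lam => ∀ a b : Fin d, a < b → lam a < lam b),
        ∑ mu ∈ (Fintype.piFinset fun _ : Fin d => Finset.Icc 1 (κ + 1)).filter
            (fun mu => ∑ e, mu e * lam e ≤ κ + 1),
          (((Nat.descFactorial κ (∑ e, mu e * lam e) : ℝ)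
              / ((∏ e, (Nat.factorial (lam e)) ^ (mu e) * Nat.factorial (mu e) : ℕ) : ℝ))
              * pd (κ - ∑ e, mu e * lam e) (∑ e, mu e) Y x (j 0)
            - (((Nat.descFactorial κ ((∑ e, mu e * lam e) - 1) * ∑ e, mu e * lam e : ℕ) : ℝ)
              / ((∏ e, (Nat.factorial (lam e)) ^ (mu e) * Nat.factorial (mu e) : ℕ) : ℝ))
              * pd (κ + 1 - ∑ e, mu e * lam e) ((∑ e, mu e) - 1) X x (j 0))
          * ∏ e, (j (lam e)) ^ (mu e) := by
  classical
  have hX' : ContDiff ℝ (⊤ : ℕ∞) (unc X) := hX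
  have hY' : ContDiff ℝ (⊤ : ℕ∞) (unc Y) := hY
  rw [PCF.main hX' hY' κ x j]
  have h0 : (0 : ℕ →₀ ℕ) ∈ MM κ :=
    mem_MM.mpr ⟨fun i hi => absurd rfl hi, by rw [wgt_zero]; omega⟩
  rw [← Finset.add_sum_erase _ _ h0]
  congr 1
  · unfold Hf tY tX
    rw [wgt_zero, deg_zero, zf_zero, Jmono_zero]
    norm_num
  · -- the big reindexing
    set L := fun d => (Fintype.piFinset fun _ : Fin d => Finset.Icc 1 κ).filter
        (fun lam => ∀ a b : Fin d, a < b → lam a < lam b) with hL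
    set U := fun (d : ℕ) (lam : Fin d → ℕ) =>
        (Fintype.piFinset fun _ : Fin d => Finset.Icc 1 (κ + 1)).filter
        (fun mu => ∑ e, mu e * lam e ≤ κ + 1) with hU
    set E := fun (d : ℕ) (lam mu : Fin d → ℕ) =>
          (((Nat.descFactorial κ (∑ e, mu e * lam e) : ℝ)
              / ((∏ e, (Nat.factorial (lam e)) ^ (mu e) * Nat.factorial (mu e) : ℕ) : ℝ))
              * pd (κ - ∑ e, mu e * lam e) (∑ e, mu e) Y x (j 0)
            - (((Nat.descFactorial κ ((∑ e, mu e * lam e) - 1) * ∑ e, mu e * lam e : ℕ) : ℝ)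
              / ((∏ e, (Nat.factorial (lam e)) ^ (mu e) * Nat.factorial (mu e) : ℕ) : ℝ))
              * pd (κ + 1 - ∑ e, mu e * lam e) ((∑ e, mu e) - 1) X x (j 0))
          * ∏ e, (j (lam e)) ^ (mu e) with hE
    have e1 : ∀ d ∈ Finset.Icc 1 (κ + 1),
        (∑ lam ∈ L d, ∑ mu ∈ U d lam, E d lam mu)
          = ∑ p ∈ (L d).sigma (U d), E d p.1 p.2 :=
      fun d _ => Finset.sum_sigma' (L d) (U d) (E d)
    rw [Finset.sum_congr rfl e1, Finset.sum_sigma' (Finset.Icc 1 (κ + 1))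
      (fun d => (L d).sigma (U d)) (fun d p => E d p.1 p.2)]
    symm
    refine Finset.sum_bij' (fun a _ => toF a.1 a.2.1 a.2.2)
      (fun m _ => ⟨m.support.card, fun e => m.support.orderEmbOfFin rfl e,
        fun e => m (m.support.orderEmbOfFin rfl e)⟩) ?_ ?_ ?_ ?_ ?_
    · -- membership: toF a ∈ (MM κ).erase 0
      rintro ⟨d, lam, mu⟩ ha
      simp only [Finset.mem_sigma, hL, hU, Finset.mem_filter, Fintype.mem_piFinset,
        Finset.mem_Icc] at ha
      obtain ⟨hd, ⟨hlam, hmono⟩, hmu, hwsum⟩ := ha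
      have hinj : Function.Injective lam := by
        intro a b hab
        by_contra hne
        rcases lt_or_gt_of_ne hne with h | h
        · exact absurd hab (Nat.ne_of_lt (hmono a b h))
        · exact absurd hab.symm (Nat.ne_of_lt (hmono b a h))
      have hmu1 : ∀ e, 1 ≤ mu e := fun e => (hmu e).1
      rw [Finset.mem_erase]
      refine ⟨?_, ?_⟩
      · show toF d lam mu ≠ 0
        intro hzero
        have e0 : Fin d := ⟨0, by omega⟩
        have h1 := toF_at hinj mu e0
        rw [hzero] at h1
        simp only [Finsupp.coe_zero, Pi.zero_apply] at h1
        have := hmu1 e0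
        omega
      · show toF d lam mu ∈ MM κ
        rw [mem_MM]
        constructor
        · intro i hi
          have hex : ∃ e, lam e = i := by
            by_contra hcon
            push_neg at hcon
            exact hi (toF_not hcon)
          obtain ⟨e, rfl⟩ := hex
          exact ⟨(hlam e).1, (hlam e).2⟩
        · rw [wgt_toF]; exact hwsum
    · -- membership of the inverse
      intro m hm
      rw [Finset.mem_erase] at hm
      obtain ⟨hne, hmem⟩ := hm
      have hsupp := (mem_MM.mp hmem).1
      have hw := (mem_MM.mp hmem).2
      have hnonempty : m.support.Nonempty := Finsupp.support_nonempty_iff.mpr hne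
      have hcard1 : 1 ≤ m.support.card := Finset.card_pos.mpr hnonempty
      have hsub : m.support ⊆ Finset.Icc 1 κ := by
        intro i hi
        rw [Finsupp.mem_support_iff] at hi
        rw [Finset.mem_Icc]
        exact hsupp i hi
      have hcard2 : m.support.card ≤ κ := by
        have := Finset.card_le_card hsub
        rwa [Nat.card_Icc, Nat.add_sub_cancel] at this
      have hwsum : ∑ e : Fin m.support.card,
          m (m.support.orderEmbOfFin rfl e) * (m.support.orderEmbOfFin rfl e) = wgt m := by
        rw [show wgt m = ∑ i ∈ m.support, i * m i from rfl]
        refine Finset.sum_bij (fun e _ => m.support.orderEmbOfFin rfl e) ?_ ?_ ?_ ?_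
        · intro e _
          exact Finset.orderEmbOfFin_mem m.support rfl e
        · intro a _ b _ h
          exact (m.support.orderEmbOfFin rfl).injective h
        · intro i hi
          have h2 : i ∈ Finset.image (fun e => m.support.orderEmbOfFin rfl e) Finset.univ := by
            rw [← support_eq_image]; exact hi
          rw [Finset.mem_image] at h2
          obtain ⟨e, _, he⟩ := h2
          exact ⟨e, Finset.mem_univ e, he⟩
        · intro e _
          ring
      simp only [Finset.mem_sigma, hL, hU, Finset.mem_filter, Fintype.mem_piFinset,
        Finset.mem_Icc]
      refine ⟨⟨hcard1, by omega⟩, ⟨?_, ?_⟩, ?_, ?_⟩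
      · intro e
        exact Finset.mem_Icc.mp (hsub (Finset.orderEmbOfFin_mem m.support rfl e))
      · intro a b hab
        exact (m.support.orderEmbOfFin rfl).strictMono hab
      · intro e
        have hmemi := Finset.orderEmbOfFin_mem m.support rfl e
        rw [Finsupp.mem_support_iff] at hmemi
        have h1 : 1 ≤ m.support.orderEmbOfFin rfl e :=
          (Finset.mem_Icc.mp (hsub (Finset.orderEmbOfFin_mem m.support rfl e))).1
        have h2 := term_le_wgt m (m.support.orderEmbOfFin rfl e)
        have h3 : m (m.support.orderEmbOfFin rfl e)
            ≤ (m.support.orderEmbOfFin rfl e) * m (m.support.orderEmbOfFin rfl e) :=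
          Nat.le_mul_of_pos_left _ (by omega)
        constructor
        · omega
        · omega
      · rw [hwsum]; exact hw
    · -- left inverse
      rintro ⟨d, lam, mu⟩ ha
      simp only [Finset.mem_sigma, hL, hU, Finset.mem_filter, Fintype.mem_piFinset,
        Finset.mem_Icc] at ha
      obtain ⟨hd, ⟨hlam, hmono⟩, hmu, hwsum⟩ := ha
      have hmono' : StrictMono lam := fun a b h => hmono a b h
      have hinj : Function.Injective lam := hmono'.injective
      have hmu1 : ∀ e, 1 ≤ mu e := fun e => (hmu e).1
      have hsupp : (toF d lam mu).support = Finset.image lam Finset.univ :=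
        support_toF hinj hmu1
      have hcard : (toF d lam mu).support.card = d := by
        rw [hsupp, Finset.card_image_of_injective _ hinj, Finset.card_univ, Fintype.card_fin]
      have hlam_eq : ∀ e' : Fin ((toF d lam mu).support.card),
          lam (Fin.cast hcard e') = (toF d lam mu).support.orderEmbOfFin rfl e' := by
        have hfmem : ∀ e' : Fin ((toF d lam mu).support.card),
            lam (Fin.cast hcard e') ∈ (toF d lam mu).support := by
          intro e'
          rw [Finsupp.mem_support_iff, toF_at hinj]
          have := hmu1 (Fin.cast hcard e')
          omega
        have hfmono : StrictMono (fun e' : Fin ((toF d lam mu).support.card) =>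
            lam (Fin.cast hcard e')) := by
          intro a b h
          apply hmono'
          rw [Fin.lt_def] at h ⊢
          simpa using h
        have := Finset.orderEmbOfFin_unique (s := (toF d lam mu).support)
          (f := fun e' => lam (Fin.cast hcard e')) rfl hfmem hfmono
        intro e'
        exact congrFun this e'
      apply triple_ext hcard
      · intro e
        rw [← hlam_eq (Fin.cast hcard.symm e)]
        exact congrArg lam (Fin.ext rfl)
      · intro e
        rw [← hlam_eq (Fin.cast hcard.symm e), toF_at hinj]
        exact congrArg mu (Fin.ext rfl)
    · -- right inverse
      intro m hm
      show toF m.support.card (fun e => m.support.orderEmbOfFin rfl e)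
        (fun e => m (m.support.orderEmbOfFin rfl e)) = m
      ext i
      by_cases hi : i ∈ m.support
      · have : ∃ e, m.support.orderEmbOfFin rfl e = i := by
          have : i ∈ Finset.image (fun e => m.support.orderEmbOfFin rfl e) Finset.univ := by
            rw [← support_eq_image]; exact hi
          rw [Finset.mem_image] at this
          obtain ⟨e, _, he⟩ := this
          exact ⟨e, he⟩
        obtain ⟨e, rfl⟩ := this
        rw [toF_at (m.support.orderEmbOfFin rfl).injective]
      · have h0 : m i = 0 := Finsupp.notMem_support_iff.mp hi
        rw [h0]
        apply toF_not
        intro e he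
        rw [← he] at hi
        exact hi (Finset.orderEmbOfFin_mem m.support rfl e)
    · -- values
      rintro ⟨d, lam, mu⟩ ha
      simp only [Finset.mem_sigma, hL, hU, Finset.mem_filter, Fintype.mem_piFinset,
        Finset.mem_Icc] at ha
      obtain ⟨hd, ⟨hlam, hmono⟩, hmu, hwsum⟩ := ha
      have hmono' : StrictMono lam := fun a b h => hmono a b h
      have hinj : Function.Injective lam := hmono'.injective
      have hmu1 : ∀ e, 1 ≤ mu e := fun e => (hmu e).1
      show E d lam mu = Hf X Y κ (toF d lam mu) x (j 0) * Jmono (toF d lam mu) j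
      rw [hE]
      unfold Hf tY tX
      rw [wgt_toF, deg_toF, zf_toF hinj hmu1, Jmono_toF hinj hmu1]
end

section
/- For every j ∈ {1,…,m} and all indices i_1, i_2 ∈ {1,…,n}, the second-order prolongation coefficient in the general case is given explicitly by: 𝐘^j_{i_1,i_2} = 𝒴^j_{x^{i_1}x^{i_2}} + Σ_{l_1=1}^{m} Σ_{k_1=1}^{n} [ δ^{k_1}_{i_1} 𝒴^j_{x^{i_2}y^{l_1}} + δ^{k_1}_{i_2} 𝒴^j_{x^{i_1}y^{l_1}} − δ^j_{l_1} 𝒳^{k_1}_{x^{i_1}x^{i_2}} ] y^{l_1}_{k_1} + Σ_{l_1,l_2=1}^{m} Σ_{k_1,k_2=1}^{n} [ δ^{k_1}_{i_1} δ^{k_2}_{i_2} 𝒴^j_{y^{l_1}y^{l_2}} − δ^j_{l_2} δ^{k_1}_{i_1} 𝒳^{k_2}_{x^{i_2}y^{l_1}} − δ^j_{l_2} δ^{k_1}_{i_2} 𝒳^{k_2}_{x^{i_1}y^{l_1}} ] y^{l_1}_{k_1} y^{l_2}_{k_2} + Σ_{l_1,l_2,l_3=1}^{m} Σ_{k_1,k_2,k_3=1}^{n}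 [ −δ^j_{l_3} δ^{k_1}_{i_1} δ^{k_2}_{i_2} 𝒳^{k_3}_{y^{l_1}y^{l_2}} ] y^{l_1}_{k_1} y^{l_2}_{k_2} y^{l_3}_{k_3} + Σ_{l_1=1}^{m} Σ_{k_1,k_2=1}^{n} [ δ^{k_1}_{i_1} δ^{k_2}_{i_2} 𝒴^j_{y^{l_1}} − δ^j_{l_1} δ^{k_1}_{i_1} 𝒳^{k_2}_{x^{i_2}} − δ^j_{l_1} δ^{k_1}_{i_2} 𝒳^{k_2}_{x^{i_1}} ] y^{l_1}_{k_1,k_2} + Σ_{l_1,l_2=1}^{m} Σ_{k_1,k_2,k_3=1}^{n} [ −δ^j_{l_1} δ^{k_2}_{i_1} δ^{k_3}_{i_2} 𝒳^{k_1}_{y^{l_2}} − δ^j_{l_2} δ^{k_3}_{i_1} δ^{k_1}_{i_2} 𝒳^{k_2}_{y^{l_1}} − δ^j_{l_2} δ^{k_1}_{i_1} δ^{k_2}_{i_2} 𝒳^{k_3}_{y^{l_1}} ] y^{l_1}_{k_1} y^{l_2}_{k_2,k_3}. -/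
/-- Kronecker symbol `δ_a^b` as a real number. -/
def kron {α : Type*} [DecidableEq α] (a b : α) : ℝ := if a = b then 1 else 0

/-- Partial derivative of `F(x,y)`, `x ∈ ℝⁿ`, `y ∈ ℝᵐ`, with respect to `y^l`. -/
noncomputable def pdyNM {n m : ℕ} (l : Fin m) (F : (Fin n → ℝ) → (Fin m → ℝ) → ℝ) :
    (Fin n → ℝ) → (Fin m → ℝ) → ℝ :=
  fun x y => deriv (fun t => F x (Function.update y l t)) (y l)

/-- Iterated partial derivative with respect to the `y`-coordinates listed in `ys`. -/
noncomputable def pdylNM {n m : ℕ} : List (Fin m) → ((Fin n → ℝ) → (Fin m → ℝ) → ℝ) →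
    ((Fin n → ℝ) → (Fin m → ℝ) → ℝ)
  | [], F => F
  | a :: ls, F => pdyNM a (pdylNM ls F)

/-- Iterated partial derivative with respect to the `x`-coordinates listed in `xs`. -/
noncomputable def pdxlNM {n m : ℕ} : List (Fin n) → ((Fin n → ℝ) → (Fin m → ℝ) → ℝ) →
    ((Fin n → ℝ) → (Fin m → ℝ) → ℝ)
  | [], F => F
  | a :: ls, F => fun x y => deriv (fun t => pdxlNM ls F (Function.update x a t) y) (x a)

/-- Mixed partial derivative `∂ F / ∂x^{xs} ∂y^{ys}`. -/
noncomputable def pdNM {n m : ℕ} (xs : List (Fin n)) (ys : List (Fin m))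
    (F : (Fin n → ℝ) → (Fin m → ℝ) → ℝ) : (Fin n → ℝ) → (Fin m → ℝ) → ℝ :=
  pdxlNM xs (pdylNM ys F)

/-- The total differentiation operator `D^λ_i` for several independent and several
dependent variables.  The state is `(x, P)` where `P (l, 0)` is the dependent variable
`y^l` and `P (l, s)` (for a multiset `s` of cardinality `c ≥ 1`) is the symmetric jet
variable `y^l_s`. -/
noncomputable def totalDnm {n m : ℕ} (lam : ℕ) (i : Fin n)
    (F : (Fin n → ℝ) → (Fin m × Multiset (Fin n) → ℝ) → ℝ) :
    (Fin n → ℝ) → (Fin m × Multiset (Fin n) → ℝ) → ℝ :=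
  fun x P =>
    deriv (fun t => F (Function.update x i t) P) (x i)
    + ∑ l : Fin m, ∑ c ∈ Finset.range lam, ∑ s ∈ (Finset.univ : Finset (Fin n)).sym c,
        P (l, i ::ₘ (s : Multiset (Fin n)))
          * deriv (fun t => F x (Function.update P (l, (s : Multiset (Fin n))) t))
              (P (l, (s : Multiset (Fin n))))

/-- The prolongation coefficients `𝐘^j_{i_1,…,i_λ}`.  The list argument records the
indices **in reverse order**: `prolongNM X Y j [i_λ, …, i_1] = 𝐘^j_{i_1,…,i_λ}`,
following the inductive definition
`𝐘^j_{i_1,…,i_λ} = D^λ_{i_λ}(𝐘^j_{i_1,…,i_{λ-1}}) − Σ_k D¹_{i_λ}(𝒳^k)·y^j_{i_1,…,i_{λ-1},k}`. -/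
noncomputable def prolongNM {n m : ℕ} (X : Fin n → (Fin n → ℝ) → (Fin m → ℝ) → ℝ)
    (Y : Fin m → (Fin n → ℝ) → (Fin m → ℝ) → ℝ) (j : Fin m) :
    List (Fin n) → (Fin n → ℝ) → (Fin m × Multiset (Fin n) → ℝ) → ℝ
  | [] => fun x P => Y j x (fun l => P (l, 0))
  | i :: is => fun x P =>
      totalDnm (is.length + 1) i (prolongNM X Y j is) x P
        - ∑ k : Fin n,
            totalDnm 1 i (fun x' P' => X k x' (fun l => P' (l, 0))) x P
              * P (j, k ::ₘ (is : Multiset (Fin n)))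


variable {n m : ℕ}

abbrev EE (n m : ℕ) := (Fin n → ℝ) × (Fin m → ℝ)

noncomputable def Dv (v : EE n m) (f : EE n m → ℝ) : EE n m → ℝ := fun p => fderiv ℝ f p v

lemma contDiff_Dv (v : EE n m) {f : EE n m → ℝ} (hf : ContDiff ℝ (⊤ : ℕ∞) f) :
    ContDiff ℝ (⊤ : ℕ∞) (Dv v f) :=
  (hf.fderiv_right (by simp)).clm_apply contDiff_const

lemma Dv_comm {f : EE n m → ℝ} (hf : ContDiff ℝ (⊤ : ℕ∞) f) (v w : EE n m) :
    Dv v (Dv w f) = Dv w (Dv v f) := by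
  funext p
  have hdf : ContDiff ℝ (⊤ : ℕ∞) (fderiv ℝ f) := hf.fderiv_right (by simp)
  have h1 : ∀ u : EE n m, fderiv ℝ (fun q => fderiv ℝ f q u) p =
      (fderiv ℝ (fderiv ℝ f) p).flip u := by
    intro u
    have := fderiv_clm_apply (c := fderiv ℝ f) (u := fun _ => u)
      (hdf.differentiable (by simp) p) (differentiableAt_const u)
    simpa using this
  show fderiv ℝ (fun q => fderiv ℝ f q w) p v = fderiv ℝ (fun q => fderiv ℝ f q v) p w
  rw [h1, h1]
  simp only [ContinuousLinearMap.flip_apply]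
  exact ((hf.contDiffAt).isSymmSndFDerivAt (by rw [minSmoothness_of_isRCLikeNormedField]; exact WithTop.coe_le_coe.2 le_top)) v w

def fnn (F : (Fin n → ℝ) → (Fin m → ℝ) → ℝ) : EE n m → ℝ := fun p => F p.1 p.2
def ex (n m : ℕ) (i : Fin n) : EE n m := (Pi.single i 1, 0)
def ey (n m : ℕ) (l : Fin m) : EE n m := (0, Pi.single l 1)

lemma upd_x (x : Fin n → ℝ) (y : Fin m → ℝ) (i : Fin n) (t : ℝ) :
    ((Function.update x i t, y) : EE n m) = (x, y) + (t - x i) • ex n m i := by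
  have h1 : Function.update x i t = x + (t - x i) • (Pi.single i 1 : Fin n → ℝ) := by
    funext k; by_cases h : k = i <;> simp [Function.update_apply, Pi.single_apply, h]
  simp [ex, Prod.ext_iff, h1]

lemma upd_y (x : Fin n → ℝ) (y : Fin m → ℝ) (l : Fin m) (t : ℝ) :
    ((x, Function.update y l t) : EE n m) = (x, y) + (t - y l) • ey n m l := by
  have h1 : Function.update y l t = y + (t - y l) • (Pi.single l 1 : Fin m → ℝ) := by
    funext k; by_cases h : k = l <;> simp [Function.update_apply, Pi.single_apply, h]
  simp [ey, Prod.ext_iff, h1]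

lemma hasDerivAt_line {f : EE n m → ℝ} (hf : Differentiable ℝ f) (p : EE n m) (v : EE n m)
    (c : ℝ) : HasDerivAt (fun t => f (p + (t - c) • v)) (Dv v f (p + (0:ℝ) • v)) c := by
  have hg : HasDerivAt (fun t : ℝ => p + (t - c) • v) v c := by
    simpa using (((hasDerivAt_id c).sub_const c).smul_const v).const_add p
  have := (hf (p + (c - c) • v)).hasFDerivAt.comp_hasDerivAt c hg
  simp only [sub_self] at this ⊢
  exact this

lemma hasDerivAt_updx {f : EE n m → ℝ} (hf : Differentiable ℝ f) (i : Fin n)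
    (x : Fin n → ℝ) (y : Fin m → ℝ) :
    HasDerivAt (fun t => f (Function.update x i t, y)) (Dv (ex n m i) f (x, y)) (x i) := by
  have hfun : (fun t => f (Function.update x i t, y))
      = fun t => f ((x, y) + (t - x i) • ex n m i) := by
    funext t; rw [upd_x]
  rw [hfun]
  simpa using hasDerivAt_line hf (x, y) (ex n m i) (x i)

lemma hasDerivAt_updy {f : EE n m → ℝ} (hf : Differentiable ℝ f) (l : Fin m)
    (x : Fin n → ℝ) (y : Fin m → ℝ) :
    HasDerivAt (fun t => f (x, Function.update y l t)) (Dv (ey n m l) f (x, y)) (y l) := by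
  have hfun : (fun t => f (x, Function.update y l t))
      = fun t => f ((x, y) + (t - y l) • ey n m l) := by
    funext t; rw [upd_y]
  rw [hfun]
  simpa using hasDerivAt_line hf (x, y) (ey n m l) (y l)

section PD
variable {n m : ℕ} {F : (Fin n → ℝ) → (Fin m → ℝ) → ℝ}

lemma pdyNM_eq (hF : Differentiable ℝ (fnn F)) (l : Fin m) (x : Fin n → ℝ) (y : Fin m → ℝ) :
    pdyNM l F x y = Dv (ey n m l) (fnn F) (x, y) :=
  (hasDerivAt_updy hF l x y).deriv

lemma pd_y (hF : ContDiff ℝ (⊤ : ℕ∞) (fnn F)) (l : Fin m) (x : Fin n → ℝ) (y : Fin m → ℝ) :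
    pdNM [] [l] F x y = Dv (ey n m l) (fnn F) (x, y) := by
  show pdyNM l (pdylNM [] F) x y = _
  exact pdyNM_eq (hF.differentiable (by simp)) l x y

lemma pd_x (hF : ContDiff ℝ (⊤ : ℕ∞) (fnn F)) (i : Fin n) (x : Fin n → ℝ) (y : Fin m → ℝ) :
    pdNM [i] [] F x y = Dv (ex n m i) (fnn F) (x, y) := by
  show deriv (fun t => pdxlNM [] F (Function.update x i t) y) (x i) = _
  exact (hasDerivAt_updx (hF.differentiable (by simp)) i x y).deriv

lemma pd_yy (hF : ContDiff ℝ (⊤ : ℕ∞) (fnn F)) (l l' : Fin m) (x : Fin n → ℝ) (y : Fin m → ℝ) :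
    pdNM [] [l, l'] F x y = Dv (ey n m l) (Dv (ey n m l') (fnn F)) (x, y) := by
  show pdyNM l (pdyNM l' (pdylNM [] F)) x y = _
  have h : fnn (pdyNM l' (pdylNM [] F)) = Dv (ey n m l') (fnn F) := by
    funext p
    exact pdyNM_eq (hF.differentiable (by simp)) l' p.1 p.2
  have hd : Differentiable ℝ (fnn (pdyNM l' (pdylNM [] F))) := by
    rw [h]; exact (contDiff_Dv _ hF).differentiable (by simp)
  rw [pdyNM_eq hd l x y, h]

lemma pd_xy (hF : ContDiff ℝ (⊤ : ℕ∞) (fnn F)) (i : Fin n) (l : Fin m) (x : Fin n → ℝ)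
    (y : Fin m → ℝ) :
    pdNM [i] [l] F x y = Dv (ex n m i) (Dv (ey n m l) (fnn F)) (x, y) := by
  show deriv (fun t => pdyNM l (pdylNM [] F) (Function.update x i t) y) (x i) = _
  have h : (fun t => pdyNM l (pdylNM [] F) (Function.update x i t) y)
      = fun t => Dv (ey n m l) (fnn F) (Function.update x i t, y) := by
    funext t
    exact pdyNM_eq (hF.differentiable (by simp)) l _ y
  rw [h]
  exact (hasDerivAt_updx ((contDiff_Dv _ hF).differentiable (by simp)) i x y).deriv

lemma pd_xx (hF : ContDiff ℝ (⊤ : ℕ∞) (fnn F)) (i i' : Fin n) (x : Fin n → ℝ) (y : Fin m → ℝ) :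
    pdNM [i, i'] [] F x y = Dv (ex n m i) (Dv (ex n m i') (fnn F)) (x, y) := by
  show deriv (fun t => pdxlNM [i'] F (Function.update x i t) y) (x i) = _
  have h : (fun t => pdxlNM [i'] F (Function.update x i t) y)
      = fun t => Dv (ex n m i') (fnn F) (Function.update x i t, y) := by
    funext t
    exact (hasDerivAt_updx (hF.differentiable (by simp)) i' _ y).deriv
  rw [h]
  exact (hasDerivAt_updx ((contDiff_Dv _ hF).differentiable (by simp)) i x y).deriv

end PD

section SymSum
variable {n : ℕ}

lemma sum_sym_one (g : Multiset (Fin n) → ℝ) :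
    ∑ s ∈ (Finset.univ : Finset (Fin n)).sym 1, g (s : Multiset (Fin n))
      = ∑ k : Fin n, g {k} := by
  refine Finset.sum_bij (fun (s : Sym (Fin n) 1) _ => Sym.oneEquiv.symm s)
    (fun _ _ => Finset.mem_univ _) (fun a _ b _ h => Sym.oneEquiv.symm.injective h)
    (fun k _ => ⟨Sym.oneEquiv k, Finset.mem_sym_iff.2 fun _ _ => Finset.mem_univ _,
      Sym.oneEquiv.symm_apply_apply k⟩) ?_
  intro s _
  show g ↑s = g {Sym.oneEquiv.symm s}
  conv_lhs => rw [← Sym.oneEquiv.apply_symm_apply s]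
  rfl

end SymSum

lemma hasDerivAt_ite (c : Prop) [Decidable c] (a v : ℝ) :
    HasDerivAt (fun t => if c then t else a) (if c then 1 else 0) v := by
  split
  · exact hasDerivAt_id' .. |>.congr_deriv rfl
  · exact hasDerivAt_const v a

section TotalD
variable {n m : ℕ}

lemma updP_zero (P : Fin m × Multiset (Fin n) → ℝ) (l : Fin m) (t : ℝ) :
    (fun l' => Function.update P (l, (0 : Multiset (Fin n))) t (l', 0))
      = Function.update (fun l' => P (l', 0)) l t := by
  funext l'
  by_cases h : l' = l
  · subst h; simp
  · rw [Function.update_apply, Function.update_apply, if_neg h, if_neg]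
    exact fun hc => h (congrArg Prod.fst hc)

lemma coe_sym_nil : ((∅ : Sym (Fin n) 0) : Multiset (Fin n)) = 0 := rfl

lemma totalD1 {F : (Fin n → ℝ) → (Fin m → ℝ) → ℝ} (hF : ContDiff ℝ (⊤ : ℕ∞) (fnn F)) (i : Fin n)
    (x : Fin n → ℝ) (P : Fin m × Multiset (Fin n) → ℝ) :
    totalDnm 1 i (fun x P => F x (fun l => P (l, 0))) x P
      = Dv (ex n m i) (fnn F) (x, fun l => P (l, 0))
        + ∑ l : Fin m, P (l, {i}) * Dv (ey n m l) (fnn F) (x, fun l => P (l, 0)) := by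
  unfold totalDnm
  congr 1
  · exact (hasDerivAt_updx (hF.differentiable (by simp)) i x _).deriv
  · refine Finset.sum_congr rfl fun l _ => ?_
    rw [Finset.sum_range_one, Finset.sym_zero, Finset.sum_singleton, coe_sym_nil]
    congr 1
    have h : (fun t => F x (fun l' => Function.update P (l, (0 : Multiset (Fin n))) t (l', 0)))
        = fun t => F x (Function.update (fun l' => P (l', 0)) l t) := by
      funext t; rw [updP_zero]
    rw [h]
    exact (hasDerivAt_updy (hF.differentiable (by simp)) l x _).deriv

end TotalD

section Prolong1
variable {n m : ℕ} {X : Fin n → (Fin n → ℝ) → (Fin m → ℝ) → ℝ}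
  {Y : Fin m → (Fin n → ℝ) → (Fin m → ℝ) → ℝ} {j : Fin m}

lemma prolong1 (hYj : ContDiff ℝ (⊤ : ℕ∞) (fnn (Y j))) (hX : ∀ k, ContDiff ℝ (⊤ : ℕ∞) (fnn (X k)))
    (i₁ : Fin n) (x : Fin n → ℝ) (P : Fin m × Multiset (Fin n) → ℝ) :
    prolongNM X Y j [i₁] x P =
      (Dv (ex n m i₁) (fnn (Y j)) (x, fun l => P (l, 0))
        + ∑ l : Fin m, P (l, {i₁}) * Dv (ey n m l) (fnn (Y j)) (x, fun l => P (l, 0)))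
      - ∑ k : Fin n,
          (Dv (ex n m i₁) (fnn (X k)) (x, fun l => P (l, 0))
            + ∑ l : Fin m, P (l, {i₁}) * Dv (ey n m l) (fnn (X k)) (x, fun l => P (l, 0)))
          * P (j, {k}) := by
  simp only [prolongNM, List.length_nil, Nat.zero_add, Multiset.coe_nil, Multiset.cons_zero]
  rw [totalD1 hYj]
  congr 1
  refine Finset.sum_congr rfl fun k _ => ?_
  rw [totalD1 (hX k)]

end Prolong1

section Shapes
variable {n m : ℕ}

lemma hasDerivAt_shape {g : ℝ → EE n m} {t₀ : ℝ} {L : (EE n m → ℝ) → ℝ}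
    (hg : ∀ f : EE n m → ℝ, Differentiable ℝ f → HasDerivAt (fun t => f (g t)) (L f) t₀)
    {a : EE n m → ℝ} {c : Fin m → EE n m → ℝ} {b : Fin n → EE n m → ℝ}
    {e : Fin n → Fin m → EE n m → ℝ}
    (ha : Differentiable ℝ a) (hc : ∀ l, Differentiable ℝ (c l))
    (hb : ∀ k, Differentiable ℝ (b k)) (he : ∀ k l, Differentiable ℝ (e k l))
    (p : Fin m → ℝ) (u : Fin n → ℝ) :
    HasDerivAt (fun t =>
      (a (g t) + ∑ l : Fin m, p l * c l (g t))
        - ∑ k : Fin n, (b k (g t) + ∑ l : Fin m, p l * e k l (g t)) * u k)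
      ((L a + ∑ l : Fin m, p l * L (c l))
        - ∑ k : Fin n, (L (b k) + ∑ l : Fin m, p l * L (e k l)) * u k) t₀ :=
  (((hg a ha).add (HasDerivAt.fun_sum fun l _ => (hg (c l) (hc l)).const_mul (p l))).sub
    (HasDerivAt.fun_sum fun k _ =>
      ((hg (b k) (hb k)).add
        (HasDerivAt.fun_sum fun l _ => (hg (e k l) (he k l)).const_mul (p l))).mul_const (u k)))

lemma hasDerivAt_shape3 (a : ℝ) (c : Fin m → ℝ) (b : Fin n → ℝ) (e : Fin n → Fin m → ℝ)
    (cond1 : Fin m → Prop) [DecidablePred cond1] (cond2 : Fin n → Prop) [DecidablePred cond2]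
    (pv : Fin m → ℝ) (uv : Fin n → ℝ) (t₀ : ℝ)
    (hp : ∀ l', cond1 l' → pv l' = t₀) (hu : ∀ k, cond2 k → uv k = t₀) :
    HasDerivAt (fun t =>
      (a + ∑ l' : Fin m, (if cond1 l' then t else pv l') * c l')
        - ∑ k : Fin n,
            (b k + ∑ l' : Fin m, (if cond1 l' then t else pv l') * e k l')
              * (if cond2 k then t else uv k))
      ((∑ l' : Fin m, (if cond1 l' then (1:ℝ) else 0) * c l')
        - ∑ k : Fin n,
            ((∑ l' : Fin m, (if cond1 l' then (1:ℝ) else 0) * e k l') * uv k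
              + (b k + ∑ l' : Fin m, pv l' * e k l') * (if cond2 k then (1:ℝ) else 0))) t₀ := by
  have hval1 : ∀ l', (if cond1 l' then t₀ else pv l') = pv l' := by
    intro l'; split
    · exact (hp l' ‹_›).symm
    · rfl
  have hval2 : ∀ k, (if cond2 k then t₀ else uv k) = uv k := by
    intro k; split
    · exact (hu k ‹_›).symm
    · rfl
  have h1 : HasDerivAt (fun t => a + ∑ l' : Fin m, (if cond1 l' then t else pv l') * c l')
      (∑ l' : Fin m, (if cond1 l' then (1:ℝ) else 0) * c l') t₀ := by
    have h0 : HasDerivAt (fun t => a + ∑ l' : Fin m, (if cond1 l' then t else pv l') * c l')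
        (0 + ∑ l' : Fin m, (if cond1 l' then (1:ℝ) else 0) * c l') t₀ :=
      (hasDerivAt_const t₀ a).add
        (HasDerivAt.fun_sum fun l' _ => (hasDerivAt_ite (cond1 l') (pv l') t₀).mul_const (c l'))
    simpa using h0
  have h2 : ∀ k : Fin n, HasDerivAt (fun t =>
      (b k + ∑ l' : Fin m, (if cond1 l' then t else pv l') * e k l')
        * (if cond2 k then t else uv k))
      ((∑ l' : Fin m, (if cond1 l' then (1:ℝ) else 0) * e k l') * uv k
        + (b k + ∑ l' : Fin m, pv l' * e k l') * (if cond2 k then (1:ℝ) else 0)) t₀ := by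
    intro k
    have hf : HasDerivAt (fun t => b k + ∑ l' : Fin m, (if cond1 l' then t else pv l') * e k l')
        (∑ l' : Fin m, (if cond1 l' then (1:ℝ) else 0) * e k l') t₀ := by
      have h0 : HasDerivAt
          (fun t => b k + ∑ l' : Fin m, (if cond1 l' then t else pv l') * e k l')
          (0 + ∑ l' : Fin m, (if cond1 l' then (1:ℝ) else 0) * e k l') t₀ :=
        (hasDerivAt_const t₀ (b k)).add
          (HasDerivAt.fun_sum fun l' _ => (hasDerivAt_ite (cond1 l') (pv l') t₀).mul_const (e k l'))
      simpa using h0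
    have hg2 : HasDerivAt (fun t => if cond2 k then t else uv k)
        (if cond2 k then (1:ℝ) else 0) t₀ := hasDerivAt_ite _ _ _
    have := hf.mul hg2
    simp only [hval1, hval2] at this
    exact this
  exact h1.sub (HasDerivAt.fun_sum fun k _ => h2 k)
end Shapes

/-- Explicit formula for the second-order prolongation coefficient `𝐘^j_{i_1,i_2}`
(several independent and several dependent variables). -/
theorem prolongation_second_order_nm
    (n m : ℕ) (hn : 0 < n) (hm : 0 < m)
    (X : Fin n → (Fin n → ℝ) → (Fin m → ℝ) → ℝ)
    (Y : Fin m → (Fin n → ℝ) → (Fin m → ℝ) → ℝ)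
    (hX : ∀ k, ContDiff ℝ (⊤ : ℕ∞) (fun p : (Fin n → ℝ) × (Fin m → ℝ) => X k p.1 p.2))
    (hY : ∀ j, ContDiff ℝ (⊤ : ℕ∞) (fun p : (Fin n → ℝ) × (Fin m → ℝ) => Y j p.1 p.2))
    (j : Fin m) (i₁ i₂ : Fin n) (x : Fin n → ℝ) (P : Fin m × Multiset (Fin n) → ℝ) :
    prolongNM X Y j [i₂, i₁] x P =
      pdNM [i₁, i₂] [] (Y j) x (fun l => P (l, 0))
      + ∑ l₁ : Fin m, ∑ k₁ : Fin n,
          (kron i₁ k₁ * pdNM [i₂] [l₁] (Y j) x (fun l => P (l, 0))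
            + kron i₂ k₁ * pdNM [i₁] [l₁] (Y j) x (fun l => P (l, 0))
            - kron j l₁ * pdNM [i₁, i₂] [] (X k₁) x (fun l => P (l, 0)))
          * P (l₁, {k₁})
      + ∑ l₁ : Fin m, ∑ l₂ : Fin m, ∑ k₁ : Fin n, ∑ k₂ : Fin n,
          (kron i₁ k₁ * kron i₂ k₂ * pdNM [] [l₁, l₂] (Y j) x (fun l => P (l, 0))
            - kron j l₂ * kron i₁ k₁ * pdNM [i₂] [l₁] (X k₂) x (fun l => P (l, 0))
            - kron j l₂ * kron i₂ k₁ * pdNM [i₁] [l₁] (X k₂) x (fun l => P (l, 0)))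
          * (P (l₁, {k₁}) * P (l₂, {k₂}))
      + ∑ l₁ : Fin m, ∑ l₂ : Fin m, ∑ l₃ : Fin m,
          ∑ k₁ : Fin n, ∑ k₂ : Fin n, ∑ k₃ : Fin n,
            (-(kron j l₃ * kron i₁ k₁ * kron i₂ k₂
                * pdNM [] [l₁, l₂] (X k₃) x (fun l => P (l, 0))))
            * (P (l₁, {k₁}) * P (l₂, {k₂}) * P (l₃, {k₃}))
      + ∑ l₁ : Fin m, ∑ k₁ : Fin n, ∑ k₂ : Fin n,
          (kron i₁ k₁ * kron i₂ k₂ * pdNM [] [l₁] (Y j) x (fun l => P (l, 0))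
            - kron j l₁ * kron i₁ k₁ * pdNM [i₂] [] (X k₂) x (fun l => P (l, 0))
            - kron j l₁ * kron i₂ k₁ * pdNM [i₁] [] (X k₂) x (fun l => P (l, 0)))
          * P (l₁, {k₁, k₂})
      + ∑ l₁ : Fin m, ∑ l₂ : Fin m, ∑ k₁ : Fin n, ∑ k₂ : Fin n, ∑ k₃ : Fin n,
          (-(kron j l₁ * kron i₁ k₂ * kron i₂ k₃
              * pdNM [] [l₂] (X k₁) x (fun l => P (l, 0)))
            - kron j l₂ * kron i₁ k₃ * kron i₂ k₁
              * pdNM [] [l₁] (X k₂) x (fun l => P (l, 0))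
            - kron j l₂ * kron i₁ k₁ * kron i₂ k₂
              * pdNM [] [l₁] (X k₃) x (fun l => P (l, 0)))
          * (P (l₁, {k₁}) * P (l₂, {k₂, k₃})) := by
  classical
  have hYj : ContDiff ℝ (⊤ : ℕ∞) (fnn (Y j)) := hY j
  have hXk : ∀ k, ContDiff ℝ (⊤ : ℕ∞) (fnn (X k)) := hX
  set y₀ : Fin m → ℝ := fun l => P (l, 0) with hy₀
  -- step A : one-step unfolding of the recursion
  have stepA : prolongNM X Y j [i₂, i₁] x P
      = totalDnm 2 i₂ (prolongNM X Y j [i₁]) x P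
        - ∑ k : Fin n,
            totalDnm 1 i₂ (fun x' P' => X k x' fun l => P' (l, 0)) x P
              * P (j, k ::ₘ (↑[i₁] : Multiset (Fin n))) := rfl
  -- split of the second-order total derivative
  have hsplit : totalDnm 2 i₂ (prolongNM X Y j [i₁]) x P
      = deriv (fun t => prolongNM X Y j [i₁] (Function.update x i₂ t) P) (x i₂)
        + ∑ l : Fin m,
            (P (l, {i₂})
                * deriv (fun t => prolongNM X Y j [i₁] x
                    (Function.update P (l, (0 : Multiset (Fin n))) t)) (P (l, 0))
              + ∑ k : Fin n, P (l, {i₂, k})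
                  * deriv (fun t => prolongNM X Y j [i₁] x
                      (Function.update P (l, ({k} : Multiset (Fin n))) t)) (P (l, {k}))) := by
    show deriv _ _ + _ = _
    congr 1
    refine Finset.sum_congr rfl fun l _ => ?_
    rw [Finset.sum_range_succ, Finset.sum_range_one, Finset.sym_zero, Finset.sum_singleton,
      coe_sym_nil,
      sum_sym_one (fun s => P (l, i₂ ::ₘ s)
        * deriv (fun t => prolongNM X Y j [i₁] x (Function.update P (l, s) t)) (P (l, s)))]
    simp only [Multiset.cons_zero]
    rfl
  -- differentiability of the coefficient functions
  have dA : Differentiable ℝ (Dv (ex n m i₁) (fnn (Y j))) :=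
    (contDiff_Dv _ hYj).differentiable (by simp)
  have dC : ∀ l, Differentiable ℝ (Dv (ey n m l) (fnn (Y j))) :=
    fun l => (contDiff_Dv _ hYj).differentiable (by simp)
  have dB : ∀ k, Differentiable ℝ (Dv (ex n m i₁) (fnn (X k))) :=
    fun k => (contDiff_Dv _ (hXk k)).differentiable (by simp)
  have dE : ∀ k l, Differentiable ℝ (Dv (ey n m l) (fnn (X k))) :=
    fun k l => (contDiff_Dv _ (hXk k)).differentiable (by simp)
  -- derivative in the x-direction
  have hd1 : deriv (fun t => prolongNM X Y j [i₁] (Function.update x i₂ t) P) (x i₂)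
      = (Dv (ex n m i₂) (Dv (ex n m i₁) (fnn (Y j))) (x, y₀)
          + ∑ l : Fin m, P (l, {i₁})
              * Dv (ex n m i₂) (Dv (ey n m l) (fnn (Y j))) (x, y₀))
        - ∑ k : Fin n,
            (Dv (ex n m i₂) (Dv (ex n m i₁) (fnn (X k))) (x, y₀)
              + ∑ l : Fin m, P (l, {i₁})
                  * Dv (ex n m i₂) (Dv (ey n m l) (fnn (X k))) (x, y₀)) * P (j, {k}) := by
    have hfun : (fun t => prolongNM X Y j [i₁] (Function.update x i₂ t) P)
        = fun t =>
          (Dv (ex n m i₁) (fnn (Y j)) (Function.update x i₂ t, y₀)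
            + ∑ l : Fin m, P (l, {i₁})
                * Dv (ey n m l) (fnn (Y j)) (Function.update x i₂ t, y₀))
          - ∑ k : Fin n,
              (Dv (ex n m i₁) (fnn (X k)) (Function.update x i₂ t, y₀)
                + ∑ l : Fin m, P (l, {i₁})
                    * Dv (ey n m l) (fnn (X k)) (Function.update x i₂ t, y₀)) * P (j, {k}) := by
      funext t; exact prolong1 hYj hXk i₁ _ P
    rw [hfun]
    exact (hasDerivAt_shape (fun f hf => hasDerivAt_updx hf i₂ x y₀)
      dA dC dB dE (fun l => P (l, {i₁})) (fun k => P (j, {k}))).deriv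
  -- derivative in the y-directions
  have hd2 : ∀ l : Fin m,
      deriv (fun t => prolongNM X Y j [i₁] x
          (Function.update P (l, (0 : Multiset (Fin n))) t)) (P (l, 0))
      = (Dv (ey n m l) (Dv (ex n m i₁) (fnn (Y j))) (x, y₀)
          + ∑ l' : Fin m, P (l', {i₁})
              * Dv (ey n m l) (Dv (ey n m l') (fnn (Y j))) (x, y₀))
        - ∑ k : Fin n,
            (Dv (ey n m l) (Dv (ex n m i₁) (fnn (X k))) (x, y₀)
              + ∑ l' : Fin m, P (l', {i₁})
                  * Dv (ey n m l) (Dv (ey n m l') (fnn (X k))) (x, y₀)) * P (j, {k}) := by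
    intro l
    have hfun : (fun t => prolongNM X Y j [i₁] x
          (Function.update P (l, (0 : Multiset (Fin n))) t))
        = fun t =>
          (Dv (ex n m i₁) (fnn (Y j)) (x, Function.update y₀ l t)
            + ∑ l' : Fin m, P (l', {i₁})
                * Dv (ey n m l') (fnn (Y j)) (x, Function.update y₀ l t))
          - ∑ k : Fin n,
              (Dv (ex n m i₁) (fnn (X k)) (x, Function.update y₀ l t)
                + ∑ l' : Fin m, P (l', {i₁})
                    * Dv (ey n m l') (fnn (X k)) (x, Function.update y₀ l t)) * P (j, {k}) := by
      funext t
      rw [prolong1 hYj hXk i₁ x (Function.update P (l, (0 : Multiset (Fin n))) t)]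
      have hj1 : ∀ l' : Fin m,
          Function.update P (l, (0 : Multiset (Fin n))) t (l', {i₁}) = P (l', {i₁}) :=
        fun l' => Function.update_of_ne (by simp) _ _
      have hj2 : ∀ k : Fin n,
          Function.update P (l, (0 : Multiset (Fin n))) t (j, {k}) = P (j, {k}) :=
        fun k => Function.update_of_ne (by simp) _ _
      simp only [updP_zero, hj1, hj2]
      rfl
    rw [hfun]
    exact (hasDerivAt_shape (fun f hf => hasDerivAt_updy hf l x y₀)
      dA dC dB dE (fun l' => P (l', {i₁})) (fun k => P (j, {k}))).deriv
  -- derivative in the first-jet directions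
  have hd3 : ∀ (l : Fin m) (k₁ : Fin n),
      deriv (fun t => prolongNM X Y j [i₁] x
          (Function.update P (l, ({k₁} : Multiset (Fin n))) t)) (P (l, {k₁}))
      = (∑ l' : Fin m,
            (if (l', ({i₁} : Multiset (Fin n))) = (l, {k₁}) then (1:ℝ) else 0)
              * Dv (ey n m l') (fnn (Y j)) (x, y₀))
        - ∑ k : Fin n,
            ((∑ l' : Fin m,
                (if (l', ({i₁} : Multiset (Fin n))) = (l, {k₁}) then (1:ℝ) else 0)
                  * Dv (ey n m l') (fnn (X k)) (x, y₀)) * P (j, {k})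
              + (Dv (ex n m i₁) (fnn (X k)) (x, y₀)
                  + ∑ l' : Fin m, P (l', {i₁}) * Dv (ey n m l') (fnn (X k)) (x, y₀))
                * (if ((j, ({k} : Multiset (Fin n))) : Fin m × Multiset (Fin n)) = (l, {k₁})
                    then (1:ℝ) else 0)) := by
    intro l k₁
    have hfun : (fun t => prolongNM X Y j [i₁] x
          (Function.update P (l, ({k₁} : Multiset (Fin n))) t))
        = fun t =>
          (Dv (ex n m i₁) (fnn (Y j)) (x, y₀)
            + ∑ l' : Fin m,
                (if (l', ({i₁} : Multiset (Fin n))) = (l, {k₁}) then t else P (l', {i₁}))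
                  * Dv (ey n m l') (fnn (Y j)) (x, y₀))
          - ∑ k : Fin n,
              (Dv (ex n m i₁) (fnn (X k)) (x, y₀)
                + ∑ l' : Fin m,
                    (if (l', ({i₁} : Multiset (Fin n))) = (l, {k₁}) then t else P (l', {i₁}))
                      * Dv (ey n m l') (fnn (X k)) (x, y₀))
                * (if ((j, ({k} : Multiset (Fin n))) : Fin m × Multiset (Fin n)) = (l, {k₁})
                    then t else P (j, {k})) := by
      funext t
      rw [prolong1 hYj hXk i₁ x (Function.update P (l, ({k₁} : Multiset (Fin n))) t)]
      have hy : (fun l' => Function.update P (l, ({k₁} : Multiset (Fin n))) t (l', 0)) = y₀ := by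
        funext l'
        exact Function.update_of_ne (by simp) _ _
      simp only [hy]
      simp only [Function.update_apply]
    rw [hfun]
    refine (hasDerivAt_shape3 _ _ _ _
      (fun l' => (l', ({i₁} : Multiset (Fin n))) = (l, {k₁}))
      (fun k => ((j, ({k} : Multiset (Fin n))) : Fin m × Multiset (Fin n)) = (l, {k₁}))
      (fun l' => P (l', {i₁})) (fun k => P (j, {k})) (P (l, {k₁}))
      (fun l' h => congrArg P h) (fun k h => congrArg P h)).deriv
  have hT4 : ∀ k : Fin n, totalDnm 1 i₂ (fun x' P' => X k x' fun l => P' (l, 0)) x P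
      = Dv (ex n m i₂) (fnn (X k)) (x, y₀)
        + ∑ l : Fin m, P (l, {i₂}) * Dv (ey n m l) (fnn (X k)) (x, y₀) :=
    fun k => totalD1 (hXk k) i₂ x P
  rw [stepA, hsplit, hd1]
  simp only [hd2, hd3, hT4, Multiset.coe_singleton, Prod.mk.injEq, Multiset.singleton_inj]
  have p1 : ∀ x y, pdNM [i₁, i₂] [] (Y j) x y
      = Dv (ex n m i₁) (Dv (ex n m i₂) (fnn (Y j))) (x, y) := pd_xx hYj i₁ i₂
  have p2 : ∀ (l : Fin m) x y, pdNM [i₂] [l] (Y j) x y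
      = Dv (ex n m i₂) (Dv (ey n m l) (fnn (Y j))) (x, y) := fun l => pd_xy hYj i₂ l
  have p3 : ∀ (l : Fin m) x y, pdNM [i₁] [l] (Y j) x y
      = Dv (ex n m i₁) (Dv (ey n m l) (fnn (Y j))) (x, y) := fun l => pd_xy hYj i₁ l
  have p4 : ∀ (l l' : Fin m) x y, pdNM [] [l, l'] (Y j) x y
      = Dv (ey n m l) (Dv (ey n m l') (fnn (Y j))) (x, y) := fun l l' => pd_yy hYj l l'
  have p5 : ∀ (l : Fin m) x y, pdNM [] [l] (Y j) x y
      = Dv (ey n m l) (fnn (Y j)) (x, y) := fun l => pd_y hYj l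
  have q1 : ∀ (k : Fin n) x y, pdNM [i₁, i₂] [] (X k) x y
      = Dv (ex n m i₁) (Dv (ex n m i₂) (fnn (X k))) (x, y) := fun k => pd_xx (hXk k) i₁ i₂
  have q2 : ∀ (k : Fin n) (l : Fin m) x y, pdNM [i₂] [l] (X k) x y
      = Dv (ex n m i₂) (Dv (ey n m l) (fnn (X k))) (x, y) := fun k l => pd_xy (hXk k) i₂ l
  have q3 : ∀ (k : Fin n) (l : Fin m) x y, pdNM [i₁] [l] (X k) x y
      = Dv (ex n m i₁) (Dv (ey n m l) (fnn (X k))) (x, y) := fun k l => pd_xy (hXk k) i₁ l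
  have q4 : ∀ (k : Fin n) (l l' : Fin m) x y, pdNM [] [l, l'] (X k) x y
      = Dv (ey n m l) (Dv (ey n m l') (fnn (X k))) (x, y) := fun k l l' => pd_yy (hXk k) l l'
  have q5 : ∀ (k : Fin n) x y, pdNM [i₂] [] (X k) x y
      = Dv (ex n m i₂) (fnn (X k)) (x, y) := fun k => pd_x (hXk k) i₂
  have q6 : ∀ (k : Fin n) x y, pdNM [i₁] [] (X k) x y
      = Dv (ex n m i₁) (fnn (X k)) (x, y) := fun k => pd_x (hXk k) i₁
  have q7 : ∀ (k : Fin n) (l : Fin m) x y, pdNM [] [l] (X k) x y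
      = Dv (ey n m l) (fnn (X k)) (x, y) := fun k l => pd_y (hXk k) l
  simp only [p1, p2, p3, p4, p5, q1, q2, q3, q4, q5, q6, q7]
  simp only [kron, mul_ite, ite_mul, one_mul, zero_mul, mul_one, mul_zero, neg_mul, mul_neg,
    neg_neg, neg_zero, Finset.sum_ite_irrel, Finset.sum_ite_eq, Finset.sum_ite_eq',
    Finset.mem_univ, if_true, Finset.sum_const_zero, add_zero, zero_add, sub_zero, zero_sub,
    Finset.sum_neg_distrib, ite_and, mul_add, add_mul, mul_sub, sub_mul, Finset.mul_sum,
    Finset.sum_mul, Finset.sum_add_distrib, Finset.sum_sub_distrib]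
  have sw1 : Dv (ex n m i₂) (Dv (ex n m i₁) (fnn (Y j)))
      = Dv (ex n m i₁) (Dv (ex n m i₂) (fnn (Y j))) := Dv_comm hYj _ _
  have sw2 : ∀ k : Fin n, Dv (ex n m i₂) (Dv (ex n m i₁) (fnn (X k)))
      = Dv (ex n m i₁) (Dv (ex n m i₂) (fnn (X k))) := fun k => Dv_comm (hXk k) _ _
  have sw3 : ∀ l : Fin m, Dv (ey n m l) (Dv (ex n m i₁) (fnn (Y j)))
      = Dv (ex n m i₁) (Dv (ey n m l) (fnn (Y j))) := fun l => Dv_comm hYj _ _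
  have sw4 : ∀ (l : Fin m) (k : Fin n), Dv (ey n m l) (Dv (ex n m i₁) (fnn (X k)))
      = Dv (ex n m i₁) (Dv (ey n m l) (fnn (X k))) := fun l k => Dv_comm (hXk k) _ _
  have hm1 : ∀ l : Fin m, P (l, {i₂, i₁}) = P (l, {i₁, i₂}) := fun l => by
    rw [Multiset.pair_comm]
  have hm2 : ∀ k : Fin n, P (j, {k, i₁}) = P (j, {i₁, k}) := fun k => by
    rw [Multiset.pair_comm]
  have hm3 : ∀ k : Fin n, P (j, k ::ₘ {i₁}) = P (j, {i₁, k}) := fun k => by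
    rw [← Multiset.insert_eq_cons, Multiset.pair_comm]
  simp only [sw1, sw2, sw3, sw4, hm1, hm2, hm3]
  have eLD : (∑ x₁ : Fin n, ∑ i : Fin m,
        P (i, {i₁}) * Dv (ex n m i₂) (Dv (ey n m i) (fnn (X x₁))) (x, y₀) * P (j, {x₁}))
      = ∑ x₁ : Fin m, ∑ x₂ : Fin n,
          Dv (ex n m i₂) (Dv (ey n m x₁) (fnn (X x₂))) (x, y₀)
            * (P (x₁, {i₁}) * P (j, {x₂})) := by
    rw [Finset.sum_comm]
    exact Finset.sum_congr rfl fun a _ => Finset.sum_congr rfl fun b _ => by ring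
  have eLF : (∑ x₁ : Fin m, ∑ i : Fin m,
        P (x₁, {i₂}) * (P (i, {i₁}) * Dv (ey n m x₁) (Dv (ey n m i) (fnn (Y j))) (x, y₀)))
      = ∑ x₁ : Fin m, ∑ x₂ : Fin m,
          Dv (ey n m x₁) (Dv (ey n m x₂) (fnn (Y j))) (x, y₀)
            * (P (x₁, {i₁}) * P (x₂, {i₂})) := by
    rw [Finset.sum_comm]
    refine Finset.sum_congr rfl fun a _ => Finset.sum_congr rfl fun b _ => ?_
    rw [show Dv (ey n m b) (Dv (ey n m a) (fnn (Y j)))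
        = Dv (ey n m a) (Dv (ey n m b) (fnn (Y j))) from Dv_comm hYj _ _]
    ring
  have eLH : (∑ x₁ : Fin m, ∑ x₂ : Fin n, ∑ i : Fin m,
        P (x₁, {i₂}) * (P (i, {i₁}) * Dv (ey n m x₁) (Dv (ey n m i) (fnn (X x₂))) (x, y₀)
          * P (j, {x₂})))
      = ∑ x₁ : Fin m, ∑ x₂ : Fin m, ∑ x₃ : Fin n,
          Dv (ey n m x₁) (Dv (ey n m x₂) (fnn (X x₃))) (x, y₀)
            * (P (x₁, {i₁}) * P (x₂, {i₂}) * P (j, {x₃})) := by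
    have h1 : (∑ x₁ : Fin m, ∑ x₂ : Fin n, ∑ i : Fin m,
          P (x₁, {i₂}) * (P (i, {i₁}) * Dv (ey n m x₁) (Dv (ey n m i) (fnn (X x₂))) (x, y₀)
            * P (j, {x₂})))
        = ∑ x₁ : Fin m, ∑ i : Fin m, ∑ x₂ : Fin n,
            P (x₁, {i₂}) * (P (i, {i₁}) * Dv (ey n m x₁) (Dv (ey n m i) (fnn (X x₂))) (x, y₀)
              * P (j, {x₂})) := Finset.sum_congr rfl fun x₁ _ => Finset.sum_comm
    rw [h1, Finset.sum_comm]
    refine Finset.sum_congr rfl fun a _ => Finset.sum_congr rfl fun b _ =>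
      Finset.sum_congr rfl fun c _ => ?_
    rw [show Dv (ey n m b) (Dv (ey n m a) (fnn (X c)))
        = Dv (ey n m a) (Dv (ey n m b) (fnn (X c))) from Dv_comm (hXk c) _ _]
    ring
  have eLL : (∑ x₁ : Fin n, ∑ i : Fin m,
        P (j, {i₂, x₁}) * (P (i, {i₁}) * Dv (ey n m i) (fnn (X x₁)) (x, y₀)))
      = ∑ x₁ : Fin m, ∑ x₂ : Fin n,
          Dv (ey n m x₁) (fnn (X x₂)) (x, y₀) * (P (x₁, {i₁}) * P (j, {i₂, x₂})) := by
    rw [Finset.sum_comm]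
    exact Finset.sum_congr rfl fun a _ => Finset.sum_congr rfl fun b _ => by ring
  have eLN : (∑ x₁ : Fin n, ∑ x₂ : Fin m,
        P (x₂, {i₂}) * Dv (ey n m x₂) (fnn (X x₁)) (x, y₀) * P (j, {i₁, x₁}))
      = ∑ x₁ : Fin m, ∑ x₂ : Fin n,
          Dv (ey n m x₁) (fnn (X x₂)) (x, y₀) * (P (x₁, {i₂}) * P (j, {i₁, x₂})) := by
    rw [Finset.sum_comm]
    exact Finset.sum_congr rfl fun a _ => Finset.sum_congr rfl fun b _ => by ring
  have g1 : (∑ l : Fin m, P (l, {i₁}) * Dv (ex n m i₂) (Dv (ey n m l) (fnn (Y j))) (x, y₀))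
      = ∑ l : Fin m, Dv (ex n m i₂) (Dv (ey n m l) (fnn (Y j))) (x, y₀) * P (l, {i₁}) :=
    Finset.sum_congr rfl fun a _ => by ring
  have g2 : (∑ x₁ : Fin m, P (x₁, {i₂}) * Dv (ex n m i₁) (Dv (ey n m x₁) (fnn (Y j))) (x, y₀))
      = ∑ x₁ : Fin m, Dv (ex n m i₁) (Dv (ey n m x₁) (fnn (Y j))) (x, y₀) * P (x₁, {i₂}) :=
    Finset.sum_congr rfl fun a _ => by ring
  have g3 : (∑ x₁ : Fin m, ∑ x₂ : Fin n,
        P (x₁, {i₂}) * (Dv (ex n m i₁) (Dv (ey n m x₁) (fnn (X x₂))) (x, y₀) * P (j, {x₂})))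
      = ∑ x₁ : Fin m, ∑ x₂ : Fin n,
          Dv (ex n m i₁) (Dv (ey n m x₁) (fnn (X x₂))) (x, y₀)
            * (P (x₁, {i₂}) * P (j, {x₂})) :=
    Finset.sum_congr rfl fun a _ => Finset.sum_congr rfl fun b _ => by ring
  have g4 : (∑ x₁ : Fin m, P (x₁, {i₁, i₂}) * Dv (ey n m x₁) (fnn (Y j)) (x, y₀))
      = ∑ x₁ : Fin m, Dv (ey n m x₁) (fnn (Y j)) (x, y₀) * P (x₁, {i₁, i₂}) :=
    Finset.sum_congr rfl fun a _ => by ring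
  have g5 : (∑ x₁ : Fin m, ∑ x₂ : Fin n,
        P (x₁, {i₁, i₂}) * (Dv (ey n m x₁) (fnn (X x₂)) (x, y₀) * P (j, {x₂})))
      = ∑ x₁ : Fin m, ∑ x₂ : Fin n,
          Dv (ey n m x₁) (fnn (X x₂)) (x, y₀) * (P (j, {x₂}) * P (x₁, {i₁, i₂})) :=
    Finset.sum_congr rfl fun a _ => Finset.sum_congr rfl fun b _ => by ring
  have g6 : (∑ x₁ : Fin n, P (j, {i₂, x₁}) * Dv (ex n m i₁) (fnn (X x₁)) (x, y₀))
      = ∑ x₁ : Fin n, Dv (ex n m i₁) (fnn (X x₁)) (x, y₀) * P (j, {i₂, x₁}) :=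
    Finset.sum_congr rfl fun a _ => by ring
  rw [eLD, eLF, eLH, eLL, eLN, g1, g2, g3, g4, g5, g6]
  ring
end
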